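/- arXiv:1510.09120 — 6 statements merged into one kernel-verified Lean document; each statement's English description precedes it below -/
import Mathlib

section
/- Let z₀ ∈ ℝⁿ, r > 0, ρ > 0, R₋₁ > 0, and let x : ℝⁿ → ℝⁿ be smooth such that the restriction of x to B_r(z₀) is a diffeomorphism onto its open image, B_ρ(y₀) ⊂ x(B_r(z₀)) where y₀ = x(z₀), and the Jacobian Dx(z) is invertible with |Dx(z)⁻¹| ≤ R₋₁ for all z ∈ B_r(z₀). Then for every a ≥ 0, b ≥ 0 and c > 0 there is a constant C, depending only on a, b, c, n, r, ρ and R₋₁, such that for all ε > 0: ∫_{B_{r/2}(z₀)} |z − z₀|^a |y₀ − x(z)|^b e^{−c|y₀ − x(z)|²/ε} dz ≤ C ε^{(n+a+b)/2}. -/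
open MeasureTheory Metric Set
open scoped ENNReal Topology

noncomputable section

abbrev Euc (n : ℕ) := EuclideanSpace ℝ (Fin n)

def IsCutoff {n : ℕ} (η : ℝ≥0∞) (ρ : Euc n → ℝ) : Prop :=
  ContDiff ℝ (⊤ : ℕ∞) ρ ∧ (∀ z, 0 ≤ ρ z) ∧
    (∀ z : Euc n, (‖z‖₊ : ℝ≥0∞) ≤ η → ρ z = 1) ∧
    (∀ z : Euc n, 2 * η ≤ (‖z‖₊ : ℝ≥0∞) → ρ z = 0)

/-- The oscillatory integral `I^α_{Φ,x,g}`. -/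
def oscInt {n : ℕ} (ε : ℝ) (K₀ : Set (Euc n))
    (g : ℝ → Euc n → Euc n → ℝ → ℂ) (x : ℝ → Euc n → Euc n)
    (Φ : ℝ → Euc n → Euc n → ℂ) (α : Fin n → ℕ) (ρ : Euc n → ℝ)
    (t : ℝ) (y : Euc n) : ℂ :=
  (ε ^ (-(((n : ℝ) + ∑ i, (α i : ℝ))) / 2) : ℝ) *
    ∫ z in K₀, g t y z ε * (∏ i, ((y i - x t z i : ℝ) : ℂ) ^ α i) *
      Complex.exp (Complex.I * Φ t (y - x t z) z / (ε : ℂ)) * ((ρ (y - x t z) : ℝ) : ℂ)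

/-- first-order partial derivative in direction `i`. -/
def pd {n : ℕ} (i : Fin n) (f : Euc n → ℂ) : Euc n → ℂ :=
  fun y => fderiv ℝ f y (EuclideanSpace.single i 1)

/-- multi-index partial derivative `∂_y^β`. -/
def mpd {n : ℕ} (β : Fin n → ℕ) (f : Euc n → ℂ) : Euc n → ℂ :=
  (List.finRange n).foldr (fun i g => (pd i)^[β i] g) f

/-- the `y`-gradient `∇_yΦ(t,0,z)` as a vector in `ℂⁿ`. -/
def gradY {n : ℕ} (Φ : ℝ → Euc n → Euc n → ℂ) (t : ℝ) (z : Euc n) :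
    EuclideanSpace ℂ (Fin n) :=
  WithLp.toLp 2 (fun i => fderiv ℝ (fun y => Φ t y z) 0 (EuclideanSpace.single i 1))

/-- the fattened set `K_d`. -/
def fatten {n : ℕ} (K₀ : Set (Euc n)) (d : ℝ) : Set (Euc n) :=
  {z | infDist z K₀ ≤ d}

/-- the caustic set `C_x`. -/
def caustic {n : ℕ} (K₀ : Set (Euc n)) (T d : ℝ) (x : ℝ → Euc n → Euc n) :
    Set (ℝ × Euc n) :=
  {p | p.1 ∈ Icc 0 T ∧ ∃ z ∈ fatten K₀ d, p.2 = x p.1 z ∧ (fderiv ℝ (x p.1) z).det = 0}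

/-- the fattened caustic set `C_{x,δ}`. -/
def causticFat {n : ℕ} (K₀ : Set (Euc n)) (T d : ℝ) (x : ℝ → Euc n → Euc n)
    (δ : ℝ) : Set (ℝ × Euc n) :=
  {p | p.1 ∈ Icc 0 T ∧ EMetric.infEdist p (caustic K₀ T d x) < ENNReal.ofReal δ}

/-- the fattened essential support `D_{x,δ}`. -/
def domFat {n : ℕ} (K₀ : Set (Euc n)) (T : ℝ) (x : ℝ → Euc n → Euc n)
    (δ : ℝ) : Set (ℝ × Euc n) :=
  {p | p.1 ∈ Icc 0 T ∧ EMetric.infEdist p.2 (x p.1 '' K₀) ≤ ENNReal.ofReal δ}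

/-- Sobolev `H^s` norm (sum of `L²` norms of partial derivatives of order ≤ s). -/
def sobNorm {n : ℕ} (s : ℕ) (f : Euc n → ℂ) : ℝ≥0∞ :=
  ∑ β : Fin n → Fin (s + 1),
    if (∑ i, (β i : ℕ)) ≤ s then eLpNorm (mpd (fun i => (β i : ℕ)) f) 2 volume else 0

/-- ε-scaled Sobolev `H^s_ε` norm. -/
def sobNormEps {n : ℕ} (s : ℕ) (ε : ℝ) (f : Euc n → ℂ) : ℝ≥0∞ :=
  ∑ β : Fin n → Fin (s + 1),
    if (∑ i, (β i : ℕ)) ≤ s then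
      ENNReal.ofReal (ε ^ (((∑ i, (β i : ℕ) : ℕ) : ℤ) - (s : ℤ))) *
        eLpNorm (mpd (fun i => (β i : ℕ)) f) 2 volume
    else 0

/-- conclusion of the uniform inverse function theorem at `(t, z₀)`. -/
def UIFTat {n : ℕ} (K₀ : Set (Euc n)) (d r ρ Rm1 : ℝ)
    (x : ℝ → Euc n → Euc n) (t : ℝ) (z₀ : Euc n) : Prop :=
  closedBall z₀ r ⊆ fatten K₀ d ∧
  Set.InjOn (x t) (ball z₀ r) ∧
  IsOpen (x t '' ball z₀ r) ∧
  (∃ m : Euc n → Euc n, ContDiffOn ℝ (⊤ : ℕ∞) m (x t '' ball z₀ r) ∧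
      ∀ z ∈ ball z₀ r, m (x t z) = z) ∧
  ball (x t z₀) ρ ⊆ x t '' ball z₀ r ∧
  ∀ z ∈ ball z₀ r, ∃ Jinv : Euc n →L[ℝ] Euc n,
    (fderiv ℝ (x t) z).comp Jinv = ContinuousLinearMap.id ℝ (Euc n) ∧
    Jinv.comp (fderiv ℝ (x t) z) = ContinuousLinearMap.id ℝ (Euc n) ∧
    ‖Jinv‖ ≤ Rm1


lemma gaussAux_sup {p q : ℝ} (hp : 0 ≤ p) (hq : 0 < q) :
    ∃ M : ℝ, 0 ≤ M ∧ ∀ s : ℝ, 0 ≤ s → s ^ p * Real.exp (-q * s ^ 2) ≤ M := by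
  set m := Nat.ceil p with hm
  refine ⟨1 + (Nat.factorial m : ℝ) / q ^ m, by positivity, fun s hs => ?_⟩
  have hfac : (0:ℝ) < (Nat.factorial m : ℝ) := by exact_mod_cast Nat.factorial_pos m
  rcases le_or_gt s 1 with h1 | h1
  · have h2 : s ^ p ≤ 1 := Real.rpow_le_one hs h1 hp
    have h3 : Real.exp (-q * s ^ 2) ≤ 1 := by
      rw [Real.exp_le_one_iff]; nlinarith
    have h4 : 0 ≤ s ^ p := Real.rpow_nonneg hs p
    have h5 : (0:ℝ) ≤ (Nat.factorial m : ℝ) / q ^ m := by positivity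
    nlinarith [Real.exp_pos (-q * s ^ 2)]
  · have hs1 : (1:ℝ) ≤ s := h1.le
    have hs0 : (0:ℝ) < s := lt_of_lt_of_le one_pos hs1
    have hsp : s ^ p ≤ s ^ (m:ℝ) := Real.rpow_le_rpow_of_exponent_le hs1 (Nat.le_ceil p)
    rw [Real.rpow_natCast] at hsp
    have hqs : (0:ℝ) < q * s ^ 2 := by positivity
    have hexp : (q * s ^ 2) ^ m ≤ (Nat.factorial m : ℝ) * Real.exp (q * s ^ 2) := by
      have := Real.pow_div_factorial_le_exp (q * s ^ 2) hqs.le m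
      rw [div_le_iff₀ hfac] at this
      linarith
    have e1 : (q * s ^ 2) ^ m = q ^ m * (s ^ m) ^ 2 := by
      rw [mul_pow, ← pow_mul, ← pow_mul, mul_comm 2 m]
    have ht : (1:ℝ) ≤ s ^ m := one_le_pow₀ hs1
    have h6 : Real.exp (-q * s ^ 2) ≤ (Nat.factorial m : ℝ) / (q ^ m * (s ^ m) ^ 2) := by
      rw [neg_mul, Real.exp_neg, inv_eq_one_div,
        div_le_div_iff₀ (Real.exp_pos _) (by positivity)]
      rw [e1] at hexp; linarith
    have h7 : s ^ m * ((Nat.factorial m : ℝ) / (q ^ m * (s ^ m) ^ 2)) = (Nat.factorial m : ℝ) / (q ^ m * s ^ m) := by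
      field_simp
    have h8 : (Nat.factorial m : ℝ) / (q ^ m * s ^ m) ≤ (Nat.factorial m : ℝ) / q ^ m := by
      apply div_le_div_of_nonneg_left hfac.le (by positivity)
      nlinarith [pow_pos hq m]
    calc s ^ p * Real.exp (-q * s ^ 2)
        ≤ s ^ m * ((Nat.factorial m : ℝ) / (q ^ m * (s ^ m) ^ 2)) := by
          apply mul_le_mul hsp h6 (Real.exp_pos _).le (by positivity)
      _ = (Nat.factorial m : ℝ) / (q ^ m * s ^ m) := h7
      _ ≤ (Nat.factorial m : ℝ) / q ^ m := h8
      _ ≤ 1 + (Nat.factorial m : ℝ) / q ^ m := by linarith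

lemma gaussAux_eps {p q : ℝ} (hp : 0 ≤ p) (hq : 0 < q) :
    ∃ M : ℝ, 0 ≤ M ∧ ∀ ε : ℝ, 0 < ε → ∀ s : ℝ, 0 ≤ s →
      s ^ p * Real.exp (-q * s ^ 2 / ε) ≤ M * ε ^ (p / 2) := by
  obtain ⟨M, hM0, hM⟩ := gaussAux_sup hp hq
  refine ⟨M, hM0, fun ε hε s hs => ?_⟩
  have hsε : 0 < Real.sqrt ε := Real.sqrt_pos.mpr hε
  set u := s / Real.sqrt ε with hu
  have hu0 : 0 ≤ u := div_nonneg hs hsε.le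
  have hsu : s = u * Real.sqrt ε := by rw [hu, div_mul_cancel₀ s hsε.ne']
  have h1 : s ^ p = u ^ p * ε ^ (p / 2) := by
    rw [hsu, Real.mul_rpow hu0 hsε.le, Real.sqrt_eq_rpow, ← Real.rpow_mul hε.le,
      one_div, inv_mul_eq_div]
  have h2 : -q * s ^ 2 / ε = -q * u ^ 2 := by
    rw [hsu, mul_pow, Real.sq_sqrt hε.le]
    field_simp
  rw [h1, h2, mul_comm (u ^ p) (ε ^ (p / 2)), mul_assoc]
  rw [mul_comm M (ε ^ (p / 2))]
  exact mul_le_mul_of_nonneg_left (hM u hu0) (Real.rpow_nonneg hε.le _)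


lemma key_lip {n : ℕ} {r ρ Rm1 : ℝ} (hr : 0 < r) (hρ : 0 < ρ) (hRm1 : 0 < Rm1)
    (x : Euc n → Euc n) (z₀ : Euc n) (hx : ContDiff ℝ (⊤ : ℕ∞) x)
    (hopen : IsOpen (x '' ball z₀ r))
    (m : Euc n → Euc n) (hm : ContDiffOn ℝ (⊤ : ℕ∞) m (x '' ball z₀ r))
    (hmx : ∀ z ∈ ball z₀ r, m (x z) = z)
    (hball : ball (x z₀) ρ ⊆ x '' ball z₀ r)
    (hJ : ∀ z ∈ ball z₀ r, ∃ Jinv : Euc n →L[ℝ] Euc n,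
      (fderiv ℝ x z).comp Jinv = ContinuousLinearMap.id ℝ (Euc n) ∧
      Jinv.comp (fderiv ℝ x z) = ContinuousLinearMap.id ℝ (Euc n) ∧
      ‖Jinv‖ ≤ Rm1) :
    ∀ z ∈ ball z₀ (r / 2), ‖z - z₀‖ ≤ max Rm1 (r / (2 * ρ)) * ‖x z₀ - x z‖ := by
  -- derivative bound for m on the image
  have hdm : ∀ y ∈ x '' ball z₀ r, DifferentiableAt ℝ m y ∧ ‖fderiv ℝ m y‖ ≤ Rm1 := by
    rintro y ⟨w, hw, rfl⟩
    have hmem : x w ∈ x '' ball z₀ r := ⟨w, hw, rfl⟩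
    have hmd : DifferentiableAt ℝ m (x w) :=
      ((hm.contDiffAt (hopen.mem_nhds hmem)).differentiableAt (by simp))
    refine ⟨hmd, ?_⟩
    obtain ⟨Jinv, hJ1, hJ2, hJn⟩ := hJ w hw
    have hxd : DifferentiableAt ℝ x w := hx.differentiable (by simp) w
    have hcomp : fderiv ℝ (m ∘ x) w = (fderiv ℝ m (x w)).comp (fderiv ℝ x w) :=
      fderiv_comp w hmd hxd
    have hev : (m ∘ x) =ᶠ[nhds w] id := by
      filter_upwards [isOpen_ball.mem_nhds hw] with u hu
      exact hmx u hu
    have hid : (fderiv ℝ m (x w)).comp (fderiv ℝ x w) = ContinuousLinearMap.id ℝ (Euc n) := by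
      rw [← hcomp, hev.fderiv_eq, fderiv_id]
    have heq : fderiv ℝ m (x w) = Jinv := by
      calc fderiv ℝ m (x w)
          = (fderiv ℝ m (x w)).comp (ContinuousLinearMap.id ℝ (Euc n)) :=
            (ContinuousLinearMap.comp_id _).symm
        _ = (fderiv ℝ m (x w)).comp ((fderiv ℝ x w).comp Jinv) := by rw [hJ1]
        _ = ((fderiv ℝ m (x w)).comp (fderiv ℝ x w)).comp Jinv :=
            (ContinuousLinearMap.comp_assoc _ _ _).symm
        _ = Jinv := by rw [hid, ContinuousLinearMap.id_comp]
    rw [heq]; exact hJn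
  intro z hz
  have hzr : z ∈ ball z₀ r := ball_subset_ball (by linarith) hz
  have hnn : 0 ≤ ‖x z₀ - x z‖ := norm_nonneg _
  rcases le_or_gt ρ ‖x z₀ - x z‖ with hge | hlt
  · have h1 : ‖z - z₀‖ < r / 2 := by rwa [mem_ball_iff_norm] at hz
    have h2 : r / 2 = r / (2 * ρ) * ρ := by field_simp
    calc ‖z - z₀‖ ≤ r / 2 := h1.le
      _ = r / (2 * ρ) * ρ := h2
      _ ≤ max Rm1 (r / (2 * ρ)) * ‖x z₀ - x z‖ :=
          mul_le_mul (le_max_right _ _) hge hρ.le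
            (le_trans (by positivity) (le_max_left Rm1 _))
  · have hmem : x z ∈ ball (x z₀) ρ := by
      rw [mem_ball_iff_norm, norm_sub_rev]; exact hlt
    have hz₀mem : x z₀ ∈ ball (x z₀) ρ := mem_ball_self hρ
    have hlip : ‖m (x z) - m (x z₀)‖ ≤ Rm1 * ‖x z - x z₀‖ :=
      Convex.norm_image_sub_le_of_norm_fderiv_le
        (fun y hy => (hdm y (hball hy)).1) (fun y hy => (hdm y (hball hy)).2)
        (convex_ball _ _) hz₀mem hmem
    rw [hmx z hzr, hmx z₀ (mem_ball_self hr), norm_sub_rev (x z) (x z₀)] at hlip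
    calc ‖z - z₀‖ ≤ Rm1 * ‖x z₀ - x z‖ := hlip
      _ ≤ max Rm1 (r / (2 * ρ)) * ‖x z₀ - x z‖ :=
          mul_le_mul_of_nonneg_right (le_max_left _ _) hnn

/-- Lemma 6.8: near a non-degenerate point of the ray map,
`∫_{B_{r/2}(z₀)} |z−z₀|^a |y₀−x(z)|^b e^{−c|y₀−x(z)|²/ε} dz ≤ C ε^{(n+a+b)/2}`,
with `C` depending only on `a, b, c, n, r, ρ, R₋₁`. -/
theorem gaussian_integral_near_ray_bound {n : ℕ}
    (a b c r ρ Rm1 : ℝ) (ha : 0 ≤ a) (hb : 0 ≤ b) (hc : 0 < c)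
    (hr : 0 < r) (hρ : 0 < ρ) (hRm1 : 0 < Rm1) :
    ∃ C : ℝ, ∀ (x : Euc n → Euc n) (z₀ : Euc n),
      ContDiff ℝ (⊤ : ℕ∞) x →
      Set.InjOn x (ball z₀ r) →
      IsOpen (x '' ball z₀ r) →
      (∃ m : Euc n → Euc n, ContDiffOn ℝ (⊤ : ℕ∞) m (x '' ball z₀ r) ∧
        ∀ z ∈ ball z₀ r, m (x z) = z) →
      ball (x z₀) ρ ⊆ x '' ball z₀ r →
      (∀ z ∈ ball z₀ r, ∃ Jinv : Euc n →L[ℝ] Euc n,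
        (fderiv ℝ x z).comp Jinv = ContinuousLinearMap.id ℝ (Euc n) ∧
        Jinv.comp (fderiv ℝ x z) = ContinuousLinearMap.id ℝ (Euc n) ∧
        ‖Jinv‖ ≤ Rm1) →
      ∀ ε > (0:ℝ),
        ∫ z in ball z₀ (r / 2),
            ‖z - z₀‖ ^ a * ‖x z₀ - x z‖ ^ b * Real.exp (-c * ‖x z₀ - x z‖ ^ 2 / ε)
          ≤ C * ε ^ (((n : ℝ) + a + b) / 2) := by
  set K : ℝ := max Rm1 (r / (2 * ρ)) with hKdef
  have hK0 : 0 < K := lt_max_of_lt_left hRm1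
  obtain ⟨M, hM0, hM⟩ := gaussAux_eps (p := a + b) (q := c / 2) (add_nonneg ha hb) (half_pos hc)
  set q' : ℝ := c / (2 * K ^ 2) with hq'def
  have hq'0 : 0 < q' := by positivity
  refine ⟨K ^ a * M * (Real.pi / q') ^ ((n : ℝ) / 2), ?_⟩
  intro x z₀ hx hinj hopen hmex hball hJ ε hε
  obtain ⟨m, hm, hmx⟩ := hmex
  have hkey := key_lip hr hρ hRm1 x z₀ hx hopen m hm hmx hball hJ
  set A : ℝ := K ^ a * M * ε ^ ((a + b) / 2) with hAdef
  have hA0 : 0 ≤ A := by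
    apply mul_nonneg (mul_nonneg (Real.rpow_nonneg hK0.le a) hM0) (Real.rpow_nonneg hε.le _)
  set F : Euc n → ℝ := fun z => ‖z - z₀‖ ^ a * ‖x z₀ - x z‖ ^ b *
    Real.exp (-c * ‖x z₀ - x z‖ ^ 2 / ε) with hFdef
  set G : Euc n → ℝ := fun z => A * Real.exp (-(q' / ε) * ‖z - z₀‖ ^ 2) with hGdef
  -- pointwise bound
  have hpt : ∀ z ∈ ball z₀ (r / 2), F z ≤ G z := by
    intro z hz
    have hds := hkey z hz
    set s := ‖x z₀ - x z‖ with hs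
    set d := ‖z - z₀‖ with hd
    have hs0 : 0 ≤ s := norm_nonneg _
    have hd0 : 0 ≤ d := norm_nonneg _
    have hexpsplit : Real.exp (-c * s ^ 2 / ε) =
        Real.exp (-(c / 2) * s ^ 2 / ε) * Real.exp (-(c / 2) * s ^ 2 / ε) := by
      rw [← Real.exp_add]; congr 1; ring
    have h1 : d ^ a ≤ K ^ a * s ^ a := by
      calc d ^ a ≤ (K * s) ^ a := Real.rpow_le_rpow hd0 hds ha
        _ = K ^ a * s ^ a := Real.mul_rpow hK0.le hs0
    have h2 : s ^ a * s ^ b = s ^ (a + b) := (Real.rpow_add_of_nonneg hs0 ha hb).symm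
    have h3 : s ^ (a + b) * Real.exp (-(c / 2) * s ^ 2 / ε) ≤ M * ε ^ ((a + b) / 2) :=
      hM ε hε s hs0
    have h4 : Real.exp (-(c / 2) * s ^ 2 / ε) ≤ Real.exp (-(q' / ε) * d ^ 2) := by
      apply Real.exp_le_exp.mpr
      have hd2 : d ^ 2 ≤ K ^ 2 * s ^ 2 := by nlinarith
      have hqK : q' * K ^ 2 = c / 2 := by
        rw [hq'def]; field_simp
      have key2 : q' * d ^ 2 ≤ c / 2 * s ^ 2 := by nlinarith [hq'0.le]
      calc -(c / 2) * s ^ 2 / ε = (-(c / 2 * s ^ 2)) / ε := by ring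
        _ ≤ (-(q' * d ^ 2)) / ε := (div_le_div_iff_of_pos_right hε).mpr (by linarith)
        _ = -(q' / ε) * d ^ 2 := by ring
    calc F z = d ^ a * (s ^ b * Real.exp (-(c / 2) * s ^ 2 / ε)) *
          Real.exp (-(c / 2) * s ^ 2 / ε) := by
          simp only [hFdef]; rw [hexpsplit]; ring
      _ ≤ K ^ a * s ^ a * (s ^ b * Real.exp (-(c / 2) * s ^ 2 / ε)) *
          Real.exp (-(c / 2) * s ^ 2 / ε) := by
          have hnn : 0 ≤ s ^ b * Real.exp (-(c / 2) * s ^ 2 / ε) := by positivity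
          exact mul_le_mul_of_nonneg_right (mul_le_mul_of_nonneg_right h1 hnn)
            (Real.exp_pos _).le
      _ = K ^ a * (s ^ (a + b) * Real.exp (-(c / 2) * s ^ 2 / ε)) *
          Real.exp (-(c / 2) * s ^ 2 / ε) := by rw [← h2]; ring
      _ ≤ K ^ a * (M * ε ^ ((a + b) / 2)) * Real.exp (-(q' / ε) * d ^ 2) := by
          apply mul_le_mul (mul_le_mul_of_nonneg_left h3 (Real.rpow_nonneg hK0.le a)) h4
            (Real.exp_pos _).le
          apply mul_nonneg (Real.rpow_nonneg hK0.le a)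
          apply mul_nonneg hM0 (Real.rpow_nonneg hε.le _)
      _ = G z := by simp only [hGdef, hAdef]; ring
  -- integrability
  have hxc : Continuous x := hx.continuous
  have hFc : Continuous F := by
    apply Continuous.mul
    · apply Continuous.mul
      · exact (continuous_id.sub continuous_const).norm.rpow_const (fun z => Or.inr ha)
      · exact ((continuous_const.sub hxc).norm).rpow_const (fun z => Or.inr hb)
    · exact Real.continuous_exp.comp
        (((continuous_const.mul ((continuous_const.sub hxc).norm.pow 2))).div_const ε)
  have hbpos : (0:ℝ) < q' / ε := div_pos hq'0 hε
  have hgauss : Integrable (fun v : Euc n => Real.exp (-(q' / ε) * ‖v‖ ^ 2)) := by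
    have h := (GaussianFourier.integrable_cexp_neg_mul_sq_norm_add
        (b := ((q' / ε : ℝ) : ℂ)) (by simpa using hbpos) (0 : ℂ) (0 : Euc n)).norm
    convert h using 2 with v
    simp [Complex.norm_exp, ← Complex.ofReal_pow]
  have hInt : Integrable (fun z : Euc n => Real.exp (-(q' / ε) * ‖z - z₀‖ ^ 2)) :=
    hgauss.comp_sub_right z₀
  have hFint : IntegrableOn F (ball z₀ (r / 2)) :=
    (hFc.continuousOn.integrableOn_compact (isCompact_closedBall z₀ (r / 2))).mono_set
      ball_subset_closedBall
  have hGint : IntegrableOn G (ball z₀ (r / 2)) := (hInt.const_mul A).integrableOn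
  -- integral comparison
  have step1 : ∫ z in ball z₀ (r / 2), F z ≤ ∫ z in ball z₀ (r / 2), G z :=
    setIntegral_mono_on hFint hGint measurableSet_ball hpt
  have step2 : ∫ z in ball z₀ (r / 2), G z =
      A * ∫ z in ball z₀ (r / 2), Real.exp (-(q' / ε) * ‖z - z₀‖ ^ 2) := by
    simp only [hGdef]; rw [integral_const_mul]
  have step3 : ∫ z in ball z₀ (r / 2), Real.exp (-(q' / ε) * ‖z - z₀‖ ^ 2) ≤
      ∫ z : Euc n, Real.exp (-(q' / ε) * ‖z - z₀‖ ^ 2) :=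
    setIntegral_le_integral hInt (Filter.Eventually.of_forall (fun z => (Real.exp_pos _).le))
  have step4 : ∫ z : Euc n, Real.exp (-(q' / ε) * ‖z - z₀‖ ^ 2) =
      (Real.pi / (q' / ε)) ^ ((n : ℝ) / 2) := by
    rw [show (∫ z : Euc n, Real.exp (-(q' / ε) * ‖z - z₀‖ ^ 2)) =
      ∫ v : Euc n, Real.exp (-(q' / ε) * ‖v‖ ^ 2) from
        integral_sub_right_eq_self (fun v : Euc n => Real.exp (-(q' / ε) * ‖v‖ ^ 2)) z₀]
    rw [GaussianFourier.integral_rexp_neg_mul_sq_norm hbpos]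
    congr 1
    simp [finrank_euclideanSpace_fin]
  have step5 : (Real.pi / (q' / ε)) ^ ((n : ℝ) / 2) =
      (Real.pi / q') ^ ((n : ℝ) / 2) * ε ^ ((n : ℝ) / 2) := by
    rw [← Real.mul_rpow (by positivity) hε.le]
    congr 1
    field_simp
  calc ∫ z in ball z₀ (r / 2), F z ≤ A * ((Real.pi / q') ^ ((n : ℝ) / 2) * ε ^ ((n : ℝ) / 2)) := by
        rw [← step5, ← step4]
        exact step1.trans (step2 ▸ mul_le_mul_of_nonneg_left step3 hA0)
    _ = K ^ a * M * (Real.pi / q') ^ ((n : ℝ) / 2) * (ε ^ ((a + b) / 2) * ε ^ ((n : ℝ) / 2)) := by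
        simp only [hAdef]; ring
    _ = K ^ a * M * (Real.pi / q') ^ ((n : ℝ) / 2) * ε ^ (((n : ℝ) + a + b) / 2) := by
        rw [← Real.rpow_add hε]
        congr 1
        ring
end
end

section
/- Let n ≥ 1, K₀ ⊂ ℝⁿ compact, T > 0, d > 0, η ∈ (0,∞], and suppose the amplitude g satisfies property (P7) with respect to the phase Φ and central ray x. Then there is a constant C, depending only on D₇, w₇, |α|, n and the measure of K₀, such that |I^α_{Φ,x,g}(t,y)| ≤ C ε^{−n/2} for all (t,y) ∈ [0,T]×ℝⁿ and all ε > 0. -/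
open MeasureTheory Metric Set
open scoped ENNReal Topology

noncomputable section

lemma coord_abs_le_norm {n : ℕ} (v : Euc n) (i : Fin n) : |v i| ≤ ‖v‖ := by
  rw [EuclideanSpace.norm_eq, ← Real.sqrt_sq_eq_abs]
  apply Real.sqrt_le_sqrt
  have := Finset.single_le_sum (f := fun j => ‖v j‖ ^ 2)
    (fun j _ => sq_nonneg _) (Finset.mem_univ i)
  simpa [Real.norm_eq_abs, sq_abs] using this

lemma gauss_bound (k : ℕ) {w : ℝ} (hw : 0 < w) {s : ℝ} (hs : 0 ≤ s) :
    s ^ k * Real.exp (-w * s ^ 2) ≤ max 1 ((Nat.factorial k : ℝ) / w ^ k) := by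
  rcases le_total s 1 with h | h
  · refine le_trans ?_ (le_max_left _ _)
    have h1 : s ^ k ≤ 1 := pow_le_one₀ hs h
    have h2 : Real.exp (-w * s ^ 2) ≤ 1 := by
      rw [Real.exp_le_one_iff]
      nlinarith [sq_nonneg s]
    nlinarith [Real.exp_pos (-w * s ^ 2), pow_nonneg hs k]
  · refine le_trans ?_ (le_max_right _ _)
    have hsp : (0:ℝ) < s := lt_of_lt_of_le zero_lt_one h
    have hx : (0:ℝ) ≤ w * s ^ 2 := by positivity
    have hexp : (w * s ^ 2) ^ k / (Nat.factorial k : ℝ) ≤ Real.exp (w * s ^ 2) := by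
      refine le_trans ?_ (Real.sum_le_exp_of_nonneg hx (k + 1))
      exact Finset.single_le_sum (f := fun i => (w * s ^ 2) ^ i / (Nat.factorial i : ℝ))
        (fun j _ => by positivity) (Finset.mem_range.2 (Nat.lt_succ_self k))
    have hpos : (0:ℝ) < (w * s ^ 2) ^ k / (Nat.factorial k : ℝ) := by positivity
    have hexp' : Real.exp (-(w * s ^ 2)) ≤ (Nat.factorial k : ℝ) / (w * s ^ 2) ^ k := by
      rw [Real.exp_neg]
      calc (Real.exp (w * s ^ 2))⁻¹ ≤ ((w * s ^ 2) ^ k / (Nat.factorial k : ℝ))⁻¹ := by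
            exact inv_anti₀ hpos hexp
        _ = (Nat.factorial k : ℝ) / (w * s ^ 2) ^ k := by
            rw [inv_div]
    have hsk : (1:ℝ) ≤ s ^ k := one_le_pow₀ h
    calc s ^ k * Real.exp (-w * s ^ 2)
        = s ^ k * Real.exp (-(w * s ^ 2)) := by ring_nf
      _ ≤ s ^ k * ((Nat.factorial k : ℝ) / (w * s ^ 2) ^ k) :=
          mul_le_mul_of_nonneg_left hexp' (pow_nonneg hs k)
      _ = (Nat.factorial k : ℝ) / (w ^ k * s ^ k) := by
          rw [mul_pow]
          field_simp
          ring
      _ ≤ (Nat.factorial k : ℝ) / (w ^ k * 1) := by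
          apply div_le_div_of_nonneg_left (by positivity) (by positivity)
          exact mul_le_mul_of_nonneg_left hsk (by positivity)
      _ = (Nat.factorial k : ℝ) / w ^ k := by rw [mul_one]

lemma scaled_gauss (k : ℕ) {w ε r : ℝ} (hw : 0 < w) (hε : 0 < ε) (hr : 0 ≤ r) :
    r ^ k * Real.exp (-w * r ^ 2 / ε) ≤
      ε ^ ((k : ℝ) / 2) * max 1 ((Nat.factorial k : ℝ) / w ^ k) := by
  have hsε : 0 < Real.sqrt ε := Real.sqrt_pos.2 hε
  set s := r / Real.sqrt ε with hs
  have hrs : r = s * Real.sqrt ε := by rw [hs, div_mul_cancel₀ r hsε.ne']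
  have hs0 : 0 ≤ s := div_nonneg hr hsε.le
  have hsqk : (Real.sqrt ε) ^ k = ε ^ ((k : ℝ) / 2) := by
    rw [Real.sqrt_eq_rpow, ← Real.rpow_natCast (ε ^ ((1:ℝ)/2)) k,
      ← Real.rpow_mul hε.le]
    congr 1
    ring
  have h1 : r ^ k = s ^ k * ε ^ ((k : ℝ) / 2) := by
    rw [hrs, mul_pow, hsqk]
  have h2 : -w * r ^ 2 / ε = -w * s ^ 2 := by
    rw [hrs, mul_pow, Real.sq_sqrt hε.le]
    field_simp
  rw [h1, h2]
  calc s ^ k * ε ^ ((k : ℝ) / 2) * Real.exp (-w * s ^ 2)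
      = ε ^ ((k : ℝ) / 2) * (s ^ k * Real.exp (-w * s ^ 2)) := by ring
    _ ≤ ε ^ ((k : ℝ) / 2) * max 1 ((Nat.factorial k : ℝ) / w ^ k) :=
        mul_le_mul_of_nonneg_left (gauss_bound k hw hs0) (Real.rpow_nonneg hε.le _)

/-- Under (P7) alone, `|I^α_{Φ,x,g}(t,y)| ≤ C ε^{-n/2}` uniformly in
`(t,y) ∈ [0,T]×ℝⁿ` and `ε > 0`. -/
theorem oscInt_crude_bound {n : ℕ} (hn : 1 ≤ n)
    (K₀ : Set (Euc n)) (hK₀ : IsCompact K₀)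
    (T : ℝ) (hT : 0 < T) (d : ℝ) (hd : 0 < d) (η : ℝ≥0∞) (hη : 0 < η)
    (ρ : Euc n → ℝ) (hρ : IsCutoff η ρ)
    (x : ℝ → Euc n → Euc n) (Φ : ℝ → Euc n → Euc n → ℂ)
    (g : ℝ → Euc n → Euc n → ℝ → ℂ) (α : Fin n → ℕ)
    -- (P7)
    (hgbd : ∃ Cg : ℝ, ∀ t ∈ Icc 0 T, ∀ y : Euc n, ∀ z ∈ fatten K₀ d, ∀ ε > (0:ℝ),
      ‖g t y z ε‖ ≤ Cg)
    (hgsupp : ∀ (t : ℝ) (y : Euc n) (ε : ℝ), ∀ z ∉ K₀, g t y z ε = 0)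
    (D₇ w₇ : ℝ) (hD₇ : 0 < D₇) (hw₇ : 0 < w₇)
    (hP7 : ∀ t ∈ Icc 0 T, ∀ z ∈ fatten K₀ d, ∀ (y : Euc n), ∀ ε > (0:ℝ),
      ‖g t y z ε * Complex.exp (Complex.I * Φ t (y - x t z) z / (ε : ℂ)) *
          ((ρ (y - x t z) : ℝ) : ℂ)‖ ≤ D₇ * Real.exp (-w₇ * ‖y - x t z‖ ^ 2 / ε)) :
    ∃ C : ℝ, ∀ t ∈ Icc 0 T, ∀ (y : Euc n), ∀ ε > (0:ℝ),
      ‖oscInt ε K₀ g x Φ α ρ t y‖ ≤ C * ε ^ (-(n : ℝ) / 2) := by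
  classical
  set k := ∑ i, α i with hk
  set M : ℝ := max 1 ((Nat.factorial k : ℝ) / w₇ ^ k) with hM
  have hM0 : 0 < M := lt_of_lt_of_le zero_lt_one (le_max_left _ _)
  refine ⟨D₇ * M * (volume K₀).toReal, ?_⟩
  intro t ht y ε hε
  have hsum : (∑ i, (α i : ℝ)) = (k : ℝ) := by rw [hk]; push_cast; rfl
  have key : ∀ z ∈ K₀,
      ‖g t y z ε * (∏ i, ((y i - x t z i : ℝ) : ℂ) ^ α i) *
        Complex.exp (Complex.I * Φ t (y - x t z) z / (ε : ℂ)) *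
        ((ρ (y - x t z) : ℝ) : ℂ)‖ ≤ D₇ * M * ε ^ ((k : ℝ) / 2) := by
    intro z hz
    have hzfat : z ∈ fatten K₀ d := by
      simp only [fatten, mem_setOf_eq]
      rw [infDist_zero_of_mem hz]
      exact hd.le
    have hG := hP7 t ht z hzfat y ε hε
    set r := ‖y - x t z‖ with hrdef
    have hr : 0 ≤ r := norm_nonneg _
    have hP : ‖∏ i, ((y i - x t z i : ℝ) : ℂ) ^ α i‖ ≤ r ^ k := by
      rw [norm_prod]
      calc ∏ i, ‖((y i - x t z i : ℝ) : ℂ) ^ α i‖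
          ≤ ∏ i, r ^ α i := by
            refine Finset.prod_le_prod (fun i _ => norm_nonneg _) (fun i _ => ?_)
            rw [norm_pow, Complex.norm_real, Real.norm_eq_abs]
            have hco : |y i - x t z i| ≤ r := by
              have h1 : y i - x t z i = (y - x t z) i := rfl
              rw [h1]
              exact coord_abs_le_norm _ i
            exact pow_le_pow_left₀ (abs_nonneg _) hco (α i)
        _ = r ^ k := Finset.prod_pow_eq_pow_sum _ _ _
    calc ‖g t y z ε * (∏ i, ((y i - x t z i : ℝ) : ℂ) ^ α i) *
            Complex.exp (Complex.I * Φ t (y - x t z) z / (ε : ℂ)) *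
            ((ρ (y - x t z) : ℝ) : ℂ)‖
        = ‖∏ i, ((y i - x t z i : ℝ) : ℂ) ^ α i‖ *
            ‖g t y z ε * Complex.exp (Complex.I * Φ t (y - x t z) z / (ε : ℂ)) *
              ((ρ (y - x t z) : ℝ) : ℂ)‖ := by
          rw [← norm_mul]
          congr 1
          ring
      _ ≤ r ^ k * (D₇ * Real.exp (-w₇ * r ^ 2 / ε)) :=
          mul_le_mul hP hG (norm_nonneg _) (pow_nonneg hr k)
      _ = D₇ * (r ^ k * Real.exp (-w₇ * r ^ 2 / ε)) := by ring
      _ ≤ D₇ * (ε ^ ((k : ℝ) / 2) * M) :=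
          mul_le_mul_of_nonneg_left (scaled_gauss k hw₇ hε hr) hD₇.le
      _ = D₇ * M * ε ^ ((k : ℝ) / 2) := by ring
  have hint : ‖∫ z in K₀, g t y z ε * (∏ i, ((y i - x t z i : ℝ) : ℂ) ^ α i) *
      Complex.exp (Complex.I * Φ t (y - x t z) z / (ε : ℂ)) *
      ((ρ (y - x t z) : ℝ) : ℂ)‖ ≤
      D₇ * M * ε ^ ((k : ℝ) / 2) * (volume K₀).toReal :=
    norm_setIntegral_le_of_norm_le_const_ae' hK₀.measure_lt_top
      (Filter.Eventually.of_forall key)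
  have hnorm : ‖oscInt ε K₀ g x Φ α ρ t y‖ =
      ε ^ (-(((n : ℝ) + (k : ℝ))) / 2) *
      ‖∫ z in K₀, g t y z ε * (∏ i, ((y i - x t z i : ℝ) : ℂ) ^ α i) *
        Complex.exp (Complex.I * Φ t (y - x t z) z / (ε : ℂ)) *
        ((ρ (y - x t z) : ℝ) : ℂ)‖ := by
    rw [oscInt, hsum, norm_mul, Complex.norm_real, Real.norm_eq_abs,
      abs_of_nonneg (Real.rpow_nonneg hε.le _)]
  rw [hnorm]
  calc ε ^ (-(((n : ℝ) + (k : ℝ))) / 2) *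
        ‖∫ z in K₀, g t y z ε * (∏ i, ((y i - x t z i : ℝ) : ℂ) ^ α i) *
          Complex.exp (Complex.I * Φ t (y - x t z) z / (ε : ℂ)) *
          ((ρ (y - x t z) : ℝ) : ℂ)‖
      ≤ ε ^ (-(((n : ℝ) + (k : ℝ))) / 2) *
        (D₇ * M * ε ^ ((k : ℝ) / 2) * (volume K₀).toReal) :=
        mul_le_mul_of_nonneg_left hint (Real.rpow_nonneg hε.le _)
    _ = D₇ * M * (volume K₀).toReal *
        (ε ^ (-(((n : ℝ) + (k : ℝ))) / 2) * ε ^ ((k : ℝ) / 2)) := by ring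
    _ = D₇ * M * (volume K₀).toReal * ε ^ (-(n : ℝ) / 2) := by
        rw [← Real.rpow_add hε]
        congr 1
        ring


end
end

section
/- Let K ⊂ ℝⁿ be compact, T > 0, 0 < η′ < η ≤ ∞, and let ρ_η and ρ_{η′} be cutoff functions of radii η and η′. Let x : [0,T]×ℝⁿ → ℝⁿ be continuous, and let Φ : [0,T]×ℝⁿ×ℝⁿ → ℂ be continuous with Im Φ(t,y,z) ≥ w|y|² for some w > 0, for all t ∈ [0,T], z ∈ K, and all y with |y| ≤ 2η (all y ∈ ℝⁿ when η = ∞). Let A be continuous with |A(t,y,z)| ≤ C_A(1 + |y|^m) for some m ≥ 0 and all t ∈ [0,T], z ∈ K, y ∈ ℝⁿ. Then there are constants C and w′ > 0 (any w′ < wη′²/2 is admissible) such that for all ε ∈ (0,1] and all (t,y) ∈ [0,T]×ℝⁿ: (2πε)^{−n/2} | ∫_K A(t, y−x(t,z), z) e^{iΦ(t, y−x(t,z), z)/ε} ( ρ_η(y−x(t,z)) − ρ_{η′}(y−x(t,z)) ) dz | ≤ C e^{−w′/ε}. -/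
open MeasureTheory Metric Set
open scoped ENNReal Topology

noncomputable section

lemma cutoff_bdd {n : ℕ} {η : ℝ≥0∞} {ρ : Euc n → ℝ} (h : IsCutoff η ρ) :
    ∃ M : ℝ, 0 ≤ M ∧ ∀ v, |ρ v| ≤ M := by
  obtain ⟨hc, hnn, h1, h0⟩ := h
  rcases eq_or_ne η ∞ with rfl | hfin
  · exact ⟨1, zero_le_one, fun v => by rw [h1 v le_top]; norm_num⟩
  · set R := (2 * η).toReal with hR
    obtain ⟨M, hM⟩ := (isCompact_closedBall (0 : Euc n) R).exists_bound_of_continuousOn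
      hc.continuous.continuousOn
    refine ⟨max M 0, le_max_right _ _, fun v => ?_⟩
    by_cases hv : v ∈ closedBall (0 : Euc n) R
    · exact (Real.norm_eq_abs _ ▸ hM v hv).trans (le_max_left _ _)
    · rw [h0 v ?_]
      · simp
      · rw [← ENNReal.ofReal_toReal (by finiteness : 2 * η ≠ ∞), ← enorm_eq_nnnorm, ← ofReal_norm]
        refine ENNReal.ofReal_le_ofReal ?_
        have := hv
        simp only [mem_closedBall, dist_zero_right, not_le] at this
        exact this.le

lemma inv_pow_mul_exp_le (n : ℕ) {c ε : ℝ} (hc : 0 < c) (hε : 0 < ε) :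
    ε⁻¹ ^ n * Real.exp (-(c / ε)) ≤ ((n : ℝ) / c) ^ n := by
  rcases Nat.eq_zero_or_pos n with rfl | hn
  · simp [Real.exp_le_one_iff, div_nonneg hc.le hε.le]
  · have hn' : (0 : ℝ) < n := by exact_mod_cast hn
    have h1 : c / (ε * n) ≤ Real.exp (c / (ε * n)) :=
      le_trans (by linarith) (Real.add_one_le_exp _)
    have h2 : (c / (ε * n)) ^ n ≤ Real.exp (c / ε) := by
      have : Real.exp (c / ε) = (Real.exp (c / (ε * n))) ^ n := by
        rw [← Real.exp_nat_mul]
        congr 1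
        field_simp
      rw [this]
      exact pow_le_pow_left₀ (by positivity) h1 n
    calc ε⁻¹ ^ n * Real.exp (-(c / ε)) = ε⁻¹ ^ n / Real.exp (c / ε) := by
          rw [Real.exp_neg]; ring
      _ ≤ ε⁻¹ ^ n / (c / (ε * n)) ^ n := by
          apply div_le_div_of_nonneg_left (by positivity) (by positivity) h2
      _ = ((n : ℝ) / c) ^ n := by
          rw [← div_pow]
          congr 1
          field_simp


lemma re_I_mul_div {z : ℂ} {ε : ℝ} (hε : ε ≠ 0) :
    (Complex.I * z / (ε : ℂ)).re = -z.im / ε := by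
  rw [Complex.div_re]
  simp [Complex.normSq, Complex.mul_re, Complex.mul_im]
  field_simp

lemma frac_mono {a b ε : ℝ} (hab : b ≤ a) (hε0 : 0 < ε) (hε1 : ε ≤ 1) :
    a - a / ε ≤ b - b / ε := by
  have h1ε : 1 ≤ 1 / ε := by rw [le_div_iff₀ hε0]; linarith
  have hprod : 0 ≤ (a - b) * (1 / ε - 1) := mul_nonneg (by linarith) (by linarith)
  have e1 : a / ε = a * (1 / ε) := by ring
  have e2 : b / ε = b * (1 / ε) := by ring
  nlinarith [hprod]

lemma quad_bound {m w s : ℝ} (hw : 0 < w) : m * s ≤ w * s ^ 2 + m ^ 2 / (4 * w) := by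
  have h4 : m ^ 2 / (4 * w) * (4 * w) = m ^ 2 := div_mul_cancel₀ _ (by positivity)
  nlinarith [sq_nonneg (2 * w * s - m)]

lemma expo_bound {m w s η' ε : ℝ} (hw : 0 < w) (hε0 : 0 < ε) (hε1 : ε ≤ 1)
    (hss : η' ^ 2 ≤ s ^ 2) :
    m * s + -(w * s ^ 2) / ε ≤ m ^ 2 / (4 * w) + w * η' ^ 2 + -(w * η' ^ 2) / ε := by
  have h1 := quad_bound (m := m) (w := w) (s := s) hw
  have h2 := frac_mono (mul_le_mul_of_nonneg_left hss hw.le) hε0 hε1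
  have e3 : -(w * s ^ 2) / ε = -(w * s ^ 2 / ε) := by ring
  have e4 : -(w * η' ^ 2) / ε = -(w * η' ^ 2 / ε) := by ring
  rw [e3, e4]; linarith

set_option maxHeartbeats 1000000 in
/-- Lemma 4.3: the difference between Gaussian beam superpositions using two
different admissible cutoff widths `η′ < η` is exponentially small in `ε`;
any `w′ < wη′²/2` is admissible. -/
theorem cutoff_difference_exponentially_small {n : ℕ}
    (K : Set (Euc n)) (hK : IsCompact K) (T : ℝ) (hT : 0 < T)
    (η' : ℝ) (η : ℝ≥0∞) (hη' : 0 < η') (hη'η : ENNReal.ofReal η' < η)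
    (ρη ρη' : Euc n → ℝ) (hρη : IsCutoff η ρη) (hρη' : IsCutoff (ENNReal.ofReal η') ρη')
    (x : ℝ → Euc n → Euc n)
    (hx : ContinuousOn (fun p : ℝ × Euc n => x p.1 p.2) (Icc 0 T ×ˢ univ))
    (Φ : ℝ → Euc n → Euc n → ℂ)
    (hΦc : ContinuousOn (fun p : ℝ × Euc n × Euc n => Φ p.1 p.2.1 p.2.2)
      (Icc 0 T ×ˢ univ ×ˢ univ))
    (w : ℝ) (hw : 0 < w)
    (hΦ : ∀ t ∈ Icc 0 T, ∀ z ∈ K, ∀ y : Euc n,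
      (‖y‖₊ : ℝ≥0∞) ≤ 2 * η → w * ‖y‖ ^ 2 ≤ (Φ t y z).im)
    (A : ℝ → Euc n → Euc n → ℂ)
    (hAc : ContinuousOn (fun p : ℝ × Euc n × Euc n => A p.1 p.2.1 p.2.2)
      (Icc 0 T ×ˢ univ ×ˢ univ))
    (CA m : ℝ) (hm : 0 ≤ m)
    (hA : ∀ t ∈ Icc 0 T, ∀ z ∈ K, ∀ y : Euc n, ‖A t y z‖ ≤ CA * (1 + ‖y‖ ^ m)) :
    ∀ w' : ℝ, 0 < w' → w' < w * η' ^ 2 / 2 →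
      ∃ C : ℝ, ∀ ε ∈ Ioc (0:ℝ) 1, ∀ t ∈ Icc 0 T, ∀ y : Euc n,
        (2 * Real.pi * ε) ^ (-(n : ℝ) / 2) *
          ‖∫ z in K, A t (y - x t z) z *
              Complex.exp (Complex.I * Φ t (y - x t z) z / (ε : ℂ)) *
              (((ρη (y - x t z) - ρη' (y - x t z)) : ℝ) : ℂ)‖
          ≤ C * Real.exp (-w' / ε) := by
  intro w' hw'pos hw'lt
  obtain ⟨M₁, hM₁0, hM₁⟩ := cutoff_bdd hρη
  obtain ⟨M₂, hM₂0, hM₂⟩ := cutoff_bdd hρη'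
  set M : ℝ := M₁ + M₂ with hMdef
  set Cb : ℝ := max CA 0 with hCbdef
  have hM0 : 0 ≤ M := by positivity
  have hCb0 : 0 ≤ Cb := le_max_right _ _
  set P : ℝ := M * Cb * 2 * Real.exp (m ^ 2 / (4 * w) + w * η' ^ 2) with hPdef
  have hP0 : 0 ≤ P := by positivity
  set c' : ℝ := w * η' ^ 2 - w' with hc'def
  have hc' : 0 < c' := by nlinarith
  refine ⟨(volume K).toReal * P * ((n : ℝ) / c') ^ n, ?_⟩
  rintro ε ⟨hε0, hε1⟩ t ht y
  have hptw : ∀ z ∈ K,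
      ‖A t (y - x t z) z * Complex.exp (Complex.I * Φ t (y - x t z) z / (ε : ℂ)) *
        (((ρη (y - x t z) - ρη' (y - x t z)) : ℝ) : ℂ)‖ ≤ P * Real.exp (-(w * η' ^ 2) / ε) := by
    intro z hz
    set v : Euc n := y - x t z with hv
    by_cases hzero : ρη v - ρη' v = 0
    · rw [hzero]
      simp only [Complex.ofReal_zero, mul_zero, norm_zero]
      positivity
    · have h2η : (‖v‖₊ : ℝ≥0∞) ≤ 2 * η := by
        by_contra hcon
        push_neg at hcon
        have e1 : ρη v = 0 := (hρη.2.2.2) v hcon.le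
        have e2 : ρη' v = 0 := (hρη'.2.2.2) v
          (le_trans (mul_le_mul_right hη'η.le 2) hcon.le)
        exact hzero (by rw [e1, e2, sub_zero])
      have hsη' : η' ≤ ‖v‖ := by
        by_contra hcon
        push_neg at hcon
        have hle : (‖v‖₊ : ℝ≥0∞) ≤ ENNReal.ofReal η' := by
          rw [← enorm_eq_nnnorm, ← ofReal_norm]
          exact ENNReal.ofReal_le_ofReal hcon.le
        have e1 : ρη v = 1 := (hρη.2.2.1) v (hle.trans hη'η.le)
        have e2 : ρη' v = 1 := (hρη'.2.2.1) v hle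
        exact hzero (by rw [e1, e2, sub_self])
      have hIm : w * ‖v‖ ^ 2 ≤ (Φ t v z).im := hΦ t ht z hz v h2η
      have hs0 : (0 : ℝ) ≤ ‖v‖ := norm_nonneg v
      set s : ℝ := ‖v‖ with hsdef
      have hre : (Complex.I * Φ t v z / (ε : ℂ)).re = -(Φ t v z).im / ε :=
        re_I_mul_div hε0.ne'
      have hexp : ‖Complex.exp (Complex.I * Φ t v z / (ε : ℂ))‖
          ≤ Real.exp (-(w * s ^ 2) / ε) := by
        rw [Complex.norm_exp, hre]
        apply Real.exp_le_exp.mpr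
        rw [div_eq_mul_inv, div_eq_mul_inv]
        exact mul_le_mul_of_nonneg_right (by linarith) (inv_nonneg.mpr hε0.le)
      have hAb : ‖A t v z‖ ≤ Cb * (1 + s ^ m) := by
        refine (hA t ht z hz v).trans ?_
        have h1 : (0 : ℝ) ≤ 1 + s ^ m := by positivity
        exact mul_le_mul_of_nonneg_right (le_max_left _ _) h1
      have hρb : ‖(((ρη v - ρη' v) : ℝ) : ℂ)‖ ≤ M := by
        rw [Complex.norm_real, Real.norm_eq_abs]
        exact (abs_sub _ _).trans (add_le_add (hM₁ v) (hM₂ v))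
      have hsm : s ^ m ≤ Real.exp (m * s) := by
        calc s ^ m ≤ (Real.exp s) ^ m :=
              Real.rpow_le_rpow hs0 (le_trans (by linarith) (Real.add_one_le_exp s)) hm
          _ = Real.exp (s * m) := (Real.exp_mul s m).symm
          _ = Real.exp (m * s) := by rw [mul_comm]
      have h1m : (1 : ℝ) ≤ Real.exp (m * s) := Real.one_le_exp (by positivity)
      have hss : η' ^ 2 ≤ s ^ 2 := pow_le_pow_left₀ hη'.le hsη' 2
      calc ‖A t v z * Complex.exp (Complex.I * Φ t v z / (ε : ℂ)) *
            (((ρη v - ρη' v) : ℝ) : ℂ)‖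
          = ‖A t v z‖ * ‖Complex.exp (Complex.I * Φ t v z / (ε : ℂ))‖ *
            ‖(((ρη v - ρη' v) : ℝ) : ℂ)‖ := by rw [norm_mul, norm_mul]
        _ ≤ (Cb * (1 + s ^ m)) * Real.exp (-(w * s ^ 2) / ε) * M :=
            mul_le_mul (mul_le_mul hAb hexp (norm_nonneg _) (by positivity)) hρb
              (norm_nonneg _) (by positivity)
        _ ≤ (Cb * (2 * Real.exp (m * s))) * Real.exp (-(w * s ^ 2) / ε) * M := by
            have h2 : 1 + s ^ m ≤ 2 * Real.exp (m * s) := by linarith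
            have := mul_le_mul_of_nonneg_left h2 hCb0
            exact mul_le_mul_of_nonneg_right
              (mul_le_mul_of_nonneg_right this (Real.exp_pos _).le) hM0
        _ = M * Cb * 2 * (Real.exp (m * s) * Real.exp (-(w * s ^ 2) / ε)) := by ring
        _ ≤ M * Cb * 2 *
            (Real.exp (m ^ 2 / (4 * w) + w * η' ^ 2) * Real.exp (-(w * η' ^ 2) / ε)) := by
            apply mul_le_mul_of_nonneg_left ?_ (by positivity)
            rw [← Real.exp_add, ← Real.exp_add]
            exact Real.exp_le_exp.mpr (expo_bound hw hε0 hε1 hss)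
        _ = P * Real.exp (-(w * η' ^ 2) / ε) := by rw [hPdef]; ring
  have hKfin : volume K < ∞ := hK.measure_lt_top
  have hint : ‖∫ z in K, A t (y - x t z) z *
        Complex.exp (Complex.I * Φ t (y - x t z) z / (ε : ℂ)) *
        (((ρη (y - x t z) - ρη' (y - x t z)) : ℝ) : ℂ)‖
      ≤ P * Real.exp (-(w * η' ^ 2) / ε) * (volume K).toReal :=
    norm_setIntegral_le_of_norm_le_const hKfin hptw
  have hrpow : (2 * Real.pi * ε) ^ (-(n : ℝ) / 2) ≤ ε⁻¹ ^ n := by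
    have hn0 : (0 : ℝ) ≤ (n : ℝ) := Nat.cast_nonneg n
    calc (2 * Real.pi * ε) ^ (-(n : ℝ) / 2) ≤ ε ^ (-(n : ℝ) / 2) :=
        Real.rpow_le_rpow_of_nonpos hε0 (by nlinarith [Real.pi_gt_three]) (by linarith)
      _ ≤ ε ^ (-(n : ℝ)) := Real.rpow_le_rpow_of_exponent_ge hε0 hε1 (by linarith)
      _ = ε⁻¹ ^ n := by
          rw [Real.rpow_neg hε0.le, Real.rpow_natCast, inv_pow]
  have hsplit : Real.exp (-(w * η' ^ 2) / ε) = Real.exp (-(c' / ε)) * Real.exp (-w' / ε) := by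
    rw [← Real.exp_add]
    congr 1
    rw [hc'def]
    field_simp
    ring
  have hinvn : (0 : ℝ) ≤ ε⁻¹ ^ n := pow_nonneg (inv_nonneg.mpr hε0.le) n
  refine le_trans (mul_le_mul hrpow hint (norm_nonneg _) hinvn) ?_
  calc ε⁻¹ ^ n * (P * Real.exp (-(w * η' ^ 2) / ε) * (volume K).toReal)
      = (volume K).toReal * P * (ε⁻¹ ^ n * Real.exp (-(c' / ε))) * Real.exp (-w' / ε) := by
        rw [hsplit]; ring
    _ ≤ (volume K).toReal * P * ((n : ℝ) / c') ^ n * Real.exp (-w' / ε) := by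
        have h0 : (0 : ℝ) ≤ (volume K).toReal * P := by positivity
        exact mul_le_mul_of_nonneg_right
          (mul_le_mul_of_nonneg_left (inv_pow_mul_exp_le n hc' hε0) h0)
          (Real.exp_pos _).le


end
end

section
/- Let n ≥ 1, let α be a multi-index with |α| odd, let A ∈ ℂ^{n×n} satisfy Im A ≥ w_a I for some w_a > 0, let J ∈ ℝ^{n×n}, z₀ ∈ ℝⁿ, r > 0, Φ₀ ∈ ℝ, D > 0 and g₀ ∈ ℂ with |g₀| ≤ D. Let η ∈ (0,∞), let ρ_η be a cutoff function of radius η, and let x : ℝⁿ → ℝⁿ satisfy |x(z) − x(z₀)| ≤ R₁|z − z₀| for all z ∈ B_{r/2}(z₀), with y₀ = x(z₀). Then there exist constants C̃ (depending only on n, α, |J|, r, D) and w̃ > 0 (any w̃ < w_a η²/(2R₁²) is admissible) such that for all ε > 0: ε^{−(n+|α|)/2} | g₀ e^{iΦ₀/ε} ∫_{B_{r/2}(z₀)} (J(z₀ − z))^α e^{i(z−z₀)ᵀ A (z−z₀)/(2ε)} ρ_η(y₀ − x(z)) dz | ≤ C̃ e^{−w̃/ε}. -/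
open MeasureTheory Metric Set
open scoped ENNReal Topology

noncomputable section

/-- auxiliary: `ε^{-p} e^{-c/ε}` is bounded on `(0,∞)`. -/
lemma aux_exp_poly_bound (p c : ℝ) (hp : 0 ≤ p) (hc : 0 < c) :
    ∃ C : ℝ, 0 ≤ C ∧ ∀ ε : ℝ, 0 < ε → ε ^ (-p) * Real.exp (-((c : ℝ) / ε)) ≤ C := by
  set m : ℕ := ⌈p⌉₊ + 1 with hmdef
  have hpm : p ≤ (m : ℝ) := (Nat.le_ceil p).trans (by exact_mod_cast Nat.le_succ _)
  have hm0 : (0 : ℝ) < m := by exact_mod_cast Nat.succ_pos _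
  refine ⟨max 1 (((m : ℝ) / c) ^ m), le_trans zero_le_one (le_max_left _ _), ?_⟩
  intro ε hε
  rcases le_or_gt 1 ε with h1 | h1
  · refine le_trans ?_ (le_max_left _ _)
    have h2 : ε ^ (-p) ≤ 1 := Real.rpow_le_one_of_one_le_of_nonpos h1 (neg_nonpos.mpr hp)
    have h3 : Real.exp (-(c / ε)) ≤ 1 :=
      Real.exp_le_one_iff.mpr (neg_nonpos.mpr (by positivity))
    calc ε ^ (-p) * Real.exp (-(c / ε)) ≤ 1 * 1 :=
          mul_le_mul h2 h3 (Real.exp_nonneg _) zero_le_one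
      _ = 1 := one_mul 1
  · refine le_trans ?_ (le_max_right _ _)
    have hεp : ε ^ (-p) ≤ ε ^ (-(m : ℝ)) :=
      Real.rpow_le_rpow_of_exponent_ge hε h1.le (neg_le_neg hpm)
    have h4 : ε ^ (-(m : ℝ)) = (ε ^ m)⁻¹ := by
      rw [Real.rpow_neg hε.le, Real.rpow_natCast]
    have ht : 0 < c / ε := div_pos hc hε
    have hbase : 0 < c / ε / m := by positivity
    have h5 : (c / ε / m) ^ m ≤ Real.exp (c / ε) := by
      have h6 : (c / ε / m) ^ m ≤ Real.exp (c / ε / m) ^ m := by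
        refine pow_le_pow_left₀ hbase.le ?_ m
        have := Real.add_one_le_exp (c / ε / m)
        linarith
      rwa [← Real.exp_nat_mul, show (m : ℝ) * (c / ε / m) = c / ε by field_simp] at h6
    have h7 : Real.exp (-(c / ε)) ≤ ((c / ε / m) ^ m)⁻¹ := by
      rw [Real.exp_neg]
      exact inv_anti₀ (by positivity) h5
    calc ε ^ (-p) * Real.exp (-(c / ε)) ≤ (ε ^ m)⁻¹ * ((c / ε / m) ^ m)⁻¹ := by
          rw [← h4]
          exact mul_le_mul hεp h7 (Real.exp_nonneg _) (by positivity)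
      _ = ((m : ℝ) / c) ^ m := by
          rw [← mul_inv, ← mul_pow, show ε * (c / ε / m) = c / m by field_simp,
            ← inv_pow, inv_div]

/-- auxiliary: oddness makes the model integral (without cutoff) vanish. -/
lemma aux_odd_integral {n : ℕ} (α : Fin n → ℕ) (hα : Odd (∑ i, α i))
    (J : Matrix (Fin n) (Fin n) ℝ) (A : Matrix (Fin n) (Fin n) ℂ)
    (z₀ : Euc n) (R : ℝ) (c : ℂ) :
    ∫ z in ball z₀ R, (∏ i, (∑ j, (J i j : ℂ) * ((z₀ j - z j : ℝ) : ℂ)) ^ α i) *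
      Complex.exp (Complex.I *
        (∑ i, ∑ j, ((z i - z₀ i : ℝ) : ℂ) * A i j * ((z j - z₀ j : ℝ) : ℂ)) / c) = 0 := by
  set f : Euc n → ℂ := fun z =>
    (∏ i, (∑ j, (J i j : ℂ) * ((z₀ j - z j : ℝ) : ℂ)) ^ α i) *
      Complex.exp (Complex.I *
        (∑ i, ∑ j, ((z i - z₀ i : ℝ) : ℂ) * A i j * ((z j - z₀ j : ℝ) : ℂ)) / c) with hfdef
  have hsym : ∀ z : Euc n, f (z₀ + z₀ - z) = -f z := by
    intro z
    have hcoord : ∀ j, (z₀ + z₀ - z) j = z₀ j + z₀ j - z j := fun j => rfl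
    have h2 : (∑ i, ∑ j, (((z₀ + z₀ - z) i - z₀ i : ℝ) : ℂ) * A i j *
          (((z₀ + z₀ - z) j - z₀ j : ℝ) : ℂ)) =
        ∑ i, ∑ j, ((z i - z₀ i : ℝ) : ℂ) * A i j * ((z j - z₀ j : ℝ) : ℂ) := by
      refine Finset.sum_congr rfl fun i _ => Finset.sum_congr rfl fun j _ => ?_
      rw [hcoord, hcoord]
      push_cast
      ring
    have h1 : ∀ i, (∑ j, (J i j : ℂ) * ((z₀ j - (z₀ + z₀ - z) j : ℝ) : ℂ)) =
        -(∑ j, (J i j : ℂ) * ((z₀ j - z j : ℝ) : ℂ)) := by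
      intro i
      rw [← Finset.sum_neg_distrib]
      refine Finset.sum_congr rfl fun j _ => ?_
      rw [hcoord]
      push_cast
      ring
    have h3 : (∏ i, (∑ j, (J i j : ℂ) * ((z₀ j - (z₀ + z₀ - z) j : ℝ) : ℂ)) ^ α i) =
        -(∏ i, (∑ j, (J i j : ℂ) * ((z₀ j - z j : ℝ) : ℂ)) ^ α i) := by
      calc (∏ i, (∑ j, (J i j : ℂ) * ((z₀ j - (z₀ + z₀ - z) j : ℝ) : ℂ)) ^ α i)
          = ∏ i, (-(∑ j, (J i j : ℂ) * ((z₀ j - z j : ℝ) : ℂ))) ^ α i :=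
            Finset.prod_congr rfl fun i _ => by rw [h1]
        _ = ∏ i, ((-1 : ℂ) ^ α i * (∑ j, (J i j : ℂ) * ((z₀ j - z j : ℝ) : ℂ)) ^ α i) :=
            Finset.prod_congr rfl fun i _ => by rw [neg_pow]
        _ = ((-1 : ℂ) ^ ∑ i, α i) * ∏ i, (∑ j, (J i j : ℂ) * ((z₀ j - z j : ℝ) : ℂ)) ^ α i := by
            rw [Finset.prod_mul_distrib, Finset.prod_pow_eq_pow_sum]
        _ = -(∏ i, (∑ j, (J i j : ℂ) * ((z₀ j - z j : ℝ) : ℂ)) ^ α i) := by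
            rw [hα.neg_one_pow, neg_one_mul]
    simp only [hfdef]
    rw [h2, h3, neg_mul]
  have hmem : ∀ z : Euc n, (z₀ + z₀ - z ∈ ball z₀ R) ↔ (z ∈ ball z₀ R) := by
    intro z
    simp only [mem_ball_iff_norm]
    rw [show z₀ + z₀ - z - z₀ = -(z - z₀) by abel, norm_neg]
  have hmap : ∫ z in ball z₀ R, f z = ∫ z in ball z₀ R, -f z := by
    conv_lhs => rw [← integral_indicator measurableSet_ball,
      ← integral_sub_left_eq_self (Set.indicator (ball z₀ R) f) volume (z₀ + z₀)]
    rw [← integral_indicator measurableSet_ball]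
    congr 1
    funext z
    by_cases hz : z ∈ ball z₀ R
    · rw [Set.indicator_of_mem ((hmem z).mpr hz), Set.indicator_of_mem hz, hsym]
    · rw [Set.indicator_of_notMem (fun h => hz ((hmem z).mp h)),
        Set.indicator_of_notMem hz]
  rw [integral_neg] at hmap
  linear_combination (2 : ℂ)⁻¹ * hmap

/-- auxiliary: splitting off an integrable function with vanishing integral. -/
lemma aux_split {X : Type*} [MeasurableSpace X] (μ : Measure X) (s : Set X) (f g : X → ℂ)
    (hf : IntegrableOn f s μ) (hf0 : ∫ z in s, f z ∂μ = 0) :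
    ∫ z in s, g z ∂μ = ∫ z in s, (g z - f z) ∂μ := by
  by_cases hInt : IntegrableOn g s μ
  · rw [integral_sub hInt hf, hf0, sub_zero]
  · rw [integral_undef hInt, integral_undef]
    intro h
    have h2 : ((fun z => g z - f z) + f) = g := by funext z; simp
    exact hInt (h2 ▸ h.add hf)

/-- Estimate (6.12): the model integral `Ĩ_B` with quadratic phase, odd monomial
and cutoff is exponentially small: any `w̃ < w_aη²/(2R₁²)` is admissible. -/
theorem model_integral_exponentially_small {n : ℕ} (hn : 1 ≤ n)
    (α : Fin n → ℕ) (hα : Odd (∑ i, α i))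
    (A : Matrix (Fin n) (Fin n) ℂ) (w_a : ℝ) (hwa : 0 < w_a)
    (hA : ∀ v : Euc n, w_a * ‖v‖ ^ 2 ≤ ∑ i, ∑ j, v i * (A i j).im * v j)
    (J : Matrix (Fin n) (Fin n) ℝ) (z₀ : Euc n) (r : ℝ) (hr : 0 < r)
    (Φ₀ : ℝ) (D : ℝ) (hD : 0 < D) (g₀ : ℂ) (hg₀ : ‖g₀‖ ≤ D)
    (η : ℝ) (hη : 0 < η) (ρ : Euc n → ℝ) (hρ : IsCutoff (ENNReal.ofReal η) ρ)
    (x : Euc n → Euc n) (R₁ : ℝ) (hR₁ : 0 < R₁)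
    (hx : ∀ z ∈ ball z₀ (r / 2), ‖x z - x z₀‖ ≤ R₁ * ‖z - z₀‖) :
    ∀ w' : ℝ, 0 < w' → w' < w_a * η ^ 2 / (2 * R₁ ^ 2) →
      ∃ C : ℝ, ∀ ε > (0:ℝ),
        ε ^ (-((n : ℝ) + ∑ i, (α i : ℝ)) / 2) *
          ‖g₀ * Complex.exp (Complex.I * (Φ₀ : ℂ) / (ε : ℂ)) *
            ∫ z in ball z₀ (r / 2),
              (∏ i, (∑ j, (J i j : ℂ) * ((z₀ j - z j : ℝ) : ℂ)) ^ α i) *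
              Complex.exp (Complex.I *
                (∑ i, ∑ j, ((z i - z₀ i : ℝ) : ℂ) * A i j * ((z j - z₀ j : ℝ) : ℂ)) /
                (2 * (ε : ℂ))) *
              ((ρ (x z₀ - x z) : ℝ) : ℂ)‖
          ≤ C * Real.exp (-w' / ε) := by
  intro w' hw'pos hw'lt
  classical
  -- a bound for the cutoff function
  obtain ⟨M, hM⟩ := (isCompact_closedBall (0 : Euc n) (2 * η)).exists_bound_of_continuousOn
    hρ.1.continuous.continuousOn
  have hρM : ∀ z : Euc n, |ρ z| ≤ max M 0 := by
    intro z
    by_cases hz : z ∈ closedBall (0 : Euc n) (2 * η)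
    · exact le_trans (by simpa [Real.norm_eq_abs] using hM z hz) (le_max_left _ _)
    · have hz' : 2 * η ≤ ‖z‖ := by
        simp only [mem_closedBall, dist_zero_right, not_le] at hz
        exact hz.le
      have hz0 : ρ z = 0 := by
        apply hρ.2.2.2
        rw [← ENNReal.ofReal_coe_nnreal, coe_nnnorm]
        calc 2 * ENNReal.ofReal η = ENNReal.ofReal (2 * η) := by
              rw [ENNReal.ofReal_mul (by norm_num : (0:ℝ) ≤ 2)]
              norm_num
          _ ≤ ENNReal.ofReal ‖z‖ := ENNReal.ofReal_le_ofReal hz'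
      simp [hz0]
  have hM0 : (0:ℝ) ≤ max M 0 := le_max_right _ _
  -- a bound for the monomial
  obtain ⟨Cm, hCm⟩ := (isCompact_closedBall z₀ (r / 2)).exists_bound_of_continuousOn
    (Continuous.continuousOn (s := closedBall z₀ (r / 2))
      (show Continuous fun z : Euc n =>
        ∏ i, (∑ j, (J i j : ℂ) * ((z₀ j - z j : ℝ) : ℂ)) ^ α i by fun_prop))
  have hCm'0 : (0:ℝ) ≤ max Cm 0 := le_max_right _ _
  have hCm' : ∀ z ∈ ball z₀ (r / 2),
      ‖∏ i, (∑ j, (J i j : ℂ) * ((z₀ j - z j : ℝ) : ℂ)) ^ α i‖ ≤ max Cm 0 := fun z hz =>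
    le_trans (hCm z (ball_subset_closedBall hz)) (le_max_left _ _)
  have hWw' : 0 < w_a * η ^ 2 / (2 * R₁ ^ 2) - w' := by linarith
  obtain ⟨C₂, hC₂0, hC₂⟩ := aux_exp_poly_bound (((n : ℝ) + ∑ i, (α i : ℝ)) / 2)
    (w_a * η ^ 2 / (2 * R₁ ^ 2) - w') (by positivity) hWw'
  refine ⟨D * ((max M 0 + 1) * max Cm 0) * (volume (ball z₀ (r / 2))).toReal * C₂, ?_⟩
  intro ε hε
  -- the phase-norm computation
  have him : ∀ (a b : ℝ) (w : ℂ), ((a : ℂ) * w * (b : ℂ)).im = a * w.im * b := by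
    intro a b w
    simp [Complex.mul_im]
  have hphn : ∀ z : Euc n,
      ‖Complex.exp (Complex.I *
          (∑ i, ∑ j, ((z i - z₀ i : ℝ) : ℂ) * A i j * ((z j - z₀ j : ℝ) : ℂ)) /
          (2 * (ε : ℂ)))‖ =
        Real.exp (-(∑ i, ∑ j, (z i - z₀ i) * (A i j).im * (z j - z₀ j)) / (2 * ε)) := by
    intro z
    have hSim : (∑ i, ∑ j, ((z i - z₀ i : ℝ) : ℂ) * A i j * ((z j - z₀ j : ℝ) : ℂ)).im
        = ∑ i, ∑ j, (z i - z₀ i) * (A i j).im * (z j - z₀ j) := by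
      rw [Complex.im_sum]
      refine Finset.sum_congr rfl fun i _ => ?_
      rw [Complex.im_sum]
      exact Finset.sum_congr rfl fun j _ => him _ _ _
    rw [Complex.norm_exp]
    congr 1
    rw [show (2 * (ε : ℂ)) = ((2 * ε : ℝ) : ℂ) by push_cast; ring, Complex.div_ofReal_re]
    congr 1
    rw [Complex.mul_re, Complex.I_re, Complex.I_im, hSim]
    ring
  -- the phase bound away from the region where the cutoff equals 1
  have hphase : ∀ z ∈ ball z₀ (r / 2), ρ (x z₀ - x z) ≠ 1 →
      ‖Complex.exp (Complex.I *
          (∑ i, ∑ j, ((z i - z₀ i : ℝ) : ℂ) * A i j * ((z j - z₀ j : ℝ) : ℂ)) /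
          (2 * (ε : ℂ)))‖ ≤ Real.exp (-(w_a * η ^ 2 / (2 * R₁ ^ 2)) / ε) := by
    intro z hz hzρ
    have h1 : η < ‖x z₀ - x z‖ := by
      by_contra h
      push_neg at h
      exact hzρ (hρ.2.2.1 _ (by
        rw [← ENNReal.ofReal_coe_nnreal, coe_nnnorm]
        exact ENNReal.ofReal_le_ofReal h))
    have h2 : η < R₁ * ‖z - z₀‖ := lt_of_lt_of_le (by rwa [norm_sub_rev] at h1) (hx z hz)
    have hnorm : η / R₁ ≤ ‖z - z₀‖ :=
      (div_le_iff₀ hR₁).mpr (by nlinarith [mul_comm R₁ ‖z - z₀‖])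
    have hAz : w_a * ‖z - z₀‖ ^ 2 ≤ ∑ i, ∑ j, (z i - z₀ i) * (A i j).im * (z j - z₀ j) := by
      have := hA (z - z₀)
      simpa [PiLp.sub_apply] using this
    rw [hphn z, Real.exp_le_exp]
    have hchain : w_a * η ^ 2 / (2 * R₁ ^ 2) / ε ≤
        (∑ i, ∑ j, (z i - z₀ i) * (A i j).im * (z j - z₀ j)) / (2 * ε) := by
      calc w_a * η ^ 2 / (2 * R₁ ^ 2) / ε = w_a * (η / R₁) ^ 2 / (2 * ε) := by
            field_simp
            try ring
        _ ≤ w_a * ‖z - z₀‖ ^ 2 / (2 * ε) := by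
            gcongr
        _ ≤ (∑ i, ∑ j, (z i - z₀ i) * (A i j).im * (z j - z₀ j)) / (2 * ε) := by
            gcongr
    rw [neg_div, neg_div]
    exact neg_le_neg hchain
  -- the bound on the whole integral
  have hf_int : IntegrableOn (fun z : Euc n =>
      (∏ i, (∑ j, (J i j : ℂ) * ((z₀ j - z j : ℝ) : ℂ)) ^ α i) *
        Complex.exp (Complex.I *
          (∑ i, ∑ j, ((z i - z₀ i : ℝ) : ℂ) * A i j * ((z j - z₀ j : ℝ) : ℂ)) /
          (2 * (ε : ℂ)))) (ball z₀ (r / 2)) volume := by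
    refine ((Continuous.continuousOn ?_).integrableOn_compact
      (isCompact_closedBall z₀ (r / 2))).mono_set ball_subset_closedBall
    fun_prop
  have hzero := aux_odd_integral α hα J A z₀ (r / 2) (2 * (ε : ℂ))
  have hsplit : (∫ z in ball z₀ (r / 2),
      (∏ i, (∑ j, (J i j : ℂ) * ((z₀ j - z j : ℝ) : ℂ)) ^ α i) *
        Complex.exp (Complex.I *
          (∑ i, ∑ j, ((z i - z₀ i : ℝ) : ℂ) * A i j * ((z j - z₀ j : ℝ) : ℂ)) /
          (2 * (ε : ℂ))) * ((ρ (x z₀ - x z) : ℝ) : ℂ)) =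
      ∫ z in ball z₀ (r / 2),
        ((∏ i, (∑ j, (J i j : ℂ) * ((z₀ j - z j : ℝ) : ℂ)) ^ α i) *
        Complex.exp (Complex.I *
          (∑ i, ∑ j, ((z i - z₀ i : ℝ) : ℂ) * A i j * ((z j - z₀ j : ℝ) : ℂ)) /
          (2 * (ε : ℂ))) * ((ρ (x z₀ - x z) : ℝ) : ℂ) -
         (∏ i, (∑ j, (J i j : ℂ) * ((z₀ j - z j : ℝ) : ℂ)) ^ α i) *
        Complex.exp (Complex.I *
          (∑ i, ∑ j, ((z i - z₀ i : ℝ) : ℂ) * A i j * ((z j - z₀ j : ℝ) : ℂ)) /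
          (2 * (ε : ℂ)))) := aux_split volume (ball z₀ (r / 2))
    (fun z : Euc n =>
      (∏ i, (∑ j, (J i j : ℂ) * ((z₀ j - z j : ℝ) : ℂ)) ^ α i) *
        Complex.exp (Complex.I *
          (∑ i, ∑ j, ((z i - z₀ i : ℝ) : ℂ) * A i j * ((z j - z₀ j : ℝ) : ℂ)) /
          (2 * (ε : ℂ))))
    (fun z : Euc n =>
      (∏ i, (∑ j, (J i j : ℂ) * ((z₀ j - z j : ℝ) : ℂ)) ^ α i) *
        Complex.exp (Complex.I *
          (∑ i, ∑ j, ((z i - z₀ i : ℝ) : ℂ) * A i j * ((z j - z₀ j : ℝ) : ℂ)) /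
          (2 * (ε : ℂ))) * ((ρ (x z₀ - x z) : ℝ) : ℂ))
    hf_int hzero
  have hIbound : ‖∫ z in ball z₀ (r / 2),
      (∏ i, (∑ j, (J i j : ℂ) * ((z₀ j - z j : ℝ) : ℂ)) ^ α i) *
        Complex.exp (Complex.I *
          (∑ i, ∑ j, ((z i - z₀ i : ℝ) : ℂ) * A i j * ((z j - z₀ j : ℝ) : ℂ)) /
          (2 * (ε : ℂ))) * ((ρ (x z₀ - x z) : ℝ) : ℂ)‖ ≤
      ((max M 0 + 1) * max Cm 0 * Real.exp (-(w_a * η ^ 2 / (2 * R₁ ^ 2)) / ε)) *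
        (volume (ball z₀ (r / 2))).toReal := by
    rw [hsplit]
    refine norm_setIntegral_le_of_norm_le_const measure_ball_lt_top ?_
    intro z hz
    by_cases hzρ : ρ (x z₀ - x z) = 1
    · rw [hzρ]
      push_cast
      rw [mul_one, sub_self, norm_zero]
      have := Real.exp_nonneg (-(w_a * η ^ 2 / (2 * R₁ ^ 2)) / ε)
      positivity
    · have hb : (∏ i, (∑ j, (J i j : ℂ) * ((z₀ j - z j : ℝ) : ℂ)) ^ α i) *
          Complex.exp (Complex.I *
            (∑ i, ∑ j, ((z i - z₀ i : ℝ) : ℂ) * A i j * ((z j - z₀ j : ℝ) : ℂ)) /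
            (2 * (ε : ℂ))) * ((ρ (x z₀ - x z) : ℝ) : ℂ) -
          (∏ i, (∑ j, (J i j : ℂ) * ((z₀ j - z j : ℝ) : ℂ)) ^ α i) *
          Complex.exp (Complex.I *
            (∑ i, ∑ j, ((z i - z₀ i : ℝ) : ℂ) * A i j * ((z j - z₀ j : ℝ) : ℂ)) /
            (2 * (ε : ℂ))) =
          (∏ i, (∑ j, (J i j : ℂ) * ((z₀ j - z j : ℝ) : ℂ)) ^ α i) *
          Complex.exp (Complex.I *
            (∑ i, ∑ j, ((z i - z₀ i : ℝ) : ℂ) * A i j * ((z j - z₀ j : ℝ) : ℂ)) /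
            (2 * (ε : ℂ))) * (((ρ (x z₀ - x z) : ℝ) : ℂ) - 1) := by ring
      rw [hb, norm_mul, norm_mul]
      have hd : ‖((ρ (x z₀ - x z) : ℝ) : ℂ) - 1‖ ≤ max M 0 + 1 := by
        rw [show ((ρ (x z₀ - x z) : ℝ) : ℂ) - 1 = ((ρ (x z₀ - x z) - 1 : ℝ) : ℂ) by
          push_cast; ring, Complex.norm_real, Real.norm_eq_abs]
        have h9 : |ρ (x z₀ - x z) - 1| ≤ |ρ (x z₀ - x z)| + |(1:ℝ)| := by
          simpa [Real.norm_eq_abs] using norm_sub_le (ρ (x z₀ - x z)) (1:ℝ)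
        have := hρM (x z₀ - x z)
        simp only [abs_one] at h9
        linarith
      refine le_trans (mul_le_mul (mul_le_mul (hCm' z hz) (hphase z hz hzρ)
        (norm_nonneg _) hCm'0) hd (norm_nonneg _)
        (mul_nonneg hCm'0 (Real.exp_nonneg _))) (le_of_eq (by ring))
  -- final assembly
  have hexp1 : ‖Complex.exp (Complex.I * (Φ₀ : ℂ) / (ε : ℂ))‖ = 1 := by
    rw [show Complex.I * (Φ₀ : ℂ) / (ε : ℂ) = ((Φ₀ / ε : ℝ) : ℂ) * Complex.I by
      push_cast; ring, Complex.norm_exp_ofReal_mul_I]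
  rw [neg_div, norm_mul, norm_mul, hexp1, mul_one]
  have hεp0 : (0:ℝ) ≤ ε ^ (-(((n : ℝ) + ∑ i, (α i : ℝ)) / 2)) :=
    (Real.rpow_pos_of_pos hε _).le
  calc ε ^ (-(((n : ℝ) + ∑ i, (α i : ℝ)) / 2)) * (‖g₀‖ *
        ‖∫ z in ball z₀ (r / 2),
          (∏ i, (∑ j, (J i j : ℂ) * ((z₀ j - z j : ℝ) : ℂ)) ^ α i) *
            Complex.exp (Complex.I *
              (∑ i, ∑ j, ((z i - z₀ i : ℝ) : ℂ) * A i j * ((z j - z₀ j : ℝ) : ℂ)) /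
              (2 * (ε : ℂ))) * ((ρ (x z₀ - x z) : ℝ) : ℂ)‖)
      ≤ ε ^ (-(((n : ℝ) + ∑ i, (α i : ℝ)) / 2)) * (D *
        (((max M 0 + 1) * max Cm 0 * Real.exp (-(w_a * η ^ 2 / (2 * R₁ ^ 2)) / ε)) *
          (volume (ball z₀ (r / 2))).toReal)) := by
        refine mul_le_mul_of_nonneg_left ?_ hεp0
        exact mul_le_mul hg₀ hIbound (norm_nonneg _) hD.le
    _ = (D * ((max M 0 + 1) * max Cm 0) * (volume (ball z₀ (r / 2))).toReal) *
        (ε ^ (-(((n : ℝ) + ∑ i, (α i : ℝ)) / 2)) *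
          Real.exp (-((w_a * η ^ 2 / (2 * R₁ ^ 2) - w') / ε))) * Real.exp (-w' / ε) := by
        rw [show Real.exp (-(w_a * η ^ 2 / (2 * R₁ ^ 2)) / ε) =
          Real.exp (-((w_a * η ^ 2 / (2 * R₁ ^ 2) - w') / ε)) * Real.exp (-w' / ε) by
          rw [← Real.exp_add]; congr 1; ring]
        ring
    _ ≤ (D * ((max M 0 + 1) * max Cm 0) * (volume (ball z₀ (r / 2))).toReal) * C₂ *
        Real.exp (-w' / ε) := by
        refine mul_le_mul_of_nonneg_right (mul_le_mul_of_nonneg_left (hC₂ ε hε) ?_)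
          (Real.exp_nonneg _)
        have h0 : (0:ℝ) ≤ (volume (ball z₀ (r / 2))).toReal := ENNReal.toReal_nonneg
        positivity
    _ = D * ((max M 0 + 1) * max Cm 0) * (volume (ball z₀ (r / 2))).toReal * C₂ *
        Real.exp (-w' / ε) := by ring


end
end

section
/- Let K₀ ⊂ ℝⁿ be compact, T > 0, x ∈ C^∞([0,T]×ℝⁿ;ℝⁿ), d > 0 and δ > 0, and let r ∈ (0,d/2], ρ > 0, R₋₁ > 0 be such that for every (t,z₀) ∈ [0,T]×K_{d/2} with (t,x(t,z₀)) ∉ C_{x,δ/2} the following hold: the closed r-ball about z₀ lies in K_d, x(t,·) restricted to B_r(z₀) is a diffeomorphism onto its open image which contains B_ρ(x(t,z₀)), and |J(t,z)⁻¹| ≤ R₋₁ for z ∈ B_r(z₀). Fix (t,y) ∈ [0,T]×ℝⁿ with dist((t,y), C_x) ≥ δ, let {z_j} ⊂ K_{d/2} be the set of all solutions of y = x(t,z) in K_{d/2}, and set ρ̄ = min(ρ, r/(2R₋₁), δ/2). Then every z ∈ K₀ satisfying |z − z_j| ≥ r/2 for all j satisfies |y − x(t,z)| ≥ ρ̄.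 -/
open MeasureTheory Metric Set
open scoped ENNReal Topology

noncomputable section

/-- Points of `K₀` away from all solutions of `y = x(t,z)` in `K_{d/2}` stay at
distance at least `ρ̄ = min(ρ, r/(2R₋₁), δ/2)` from `y`. -/
theorem away_from_solutions_lower_bound {n : ℕ}
    (K₀ : Set (Euc n)) (hK₀ : IsCompact K₀) (T : ℝ) (hT : 0 < T)
    (x : ℝ → Euc n → Euc n)
    (hx : ContDiffOn ℝ (⊤ : ℕ∞) (fun p : ℝ × Euc n => x p.1 p.2) (Icc 0 T ×ˢ univ))
    (d δ : ℝ) (hd : 0 < d) (hδ : 0 < δ)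
    (r ρ Rm1 : ℝ) (hr : r ∈ Ioc (0:ℝ) (d / 2)) (hρ : 0 < ρ) (hRm1 : 0 < Rm1)
    (hUIFT : ∀ t ∈ Icc 0 T, ∀ z₀ ∈ fatten K₀ (d / 2),
      (t, x t z₀) ∉ causticFat K₀ T d x (δ / 2) → UIFTat K₀ d r ρ Rm1 x t z₀)
    (t : ℝ) (ht : t ∈ Icc 0 T) (y : Euc n)
    (hy : ENNReal.ofReal δ ≤ EMetric.infEdist ((t, y) : ℝ × Euc n) (caustic K₀ T d x)) :
    ∀ z ∈ K₀,
      (∀ zj ∈ {w ∈ fatten K₀ (d / 2) | y = x t w}, r / 2 ≤ dist z zj) →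
      min (min ρ (r / (2 * Rm1))) (δ / 2) ≤ ‖y - x t z‖ := by
  intro z hz hsep
  by_contra hlt
  push_neg at hlt
  have hyz_ρ : ‖y - x t z‖ < ρ :=
    lt_of_lt_of_le hlt (le_trans (min_le_left _ _) (min_le_left _ _))
  have hyz_r : ‖y - x t z‖ < r / (2 * Rm1) :=
    lt_of_lt_of_le hlt (le_trans (min_le_left _ _) (min_le_right _ _))
  have hyz_δ : ‖y - x t z‖ < δ / 2 := lt_of_lt_of_le hlt (min_le_right _ _)
  have hr0 : 0 < r := hr.1
  have hz2 : z ∈ fatten K₀ (d / 2) := by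
    simp only [fatten, Set.mem_setOf_eq, Metric.infDist_zero_of_mem hz]
    positivity
  -- (t, x t z) is far from the caustic
  have hnc : (t, x t z) ∉ causticFat K₀ T d x (δ / 2) := by
    rintro ⟨-, hlt'⟩
    have h1 : EMetric.infEdist ((t, y) : ℝ × Euc n) (caustic K₀ T d x)
        ≤ EMetric.infEdist ((t, x t z) : ℝ × Euc n) (caustic K₀ T d x)
          + edist ((t, y) : ℝ × Euc n) (t, x t z) :=
      EMetric.infEdist_le_infEdist_add_edist
    have h2 : edist ((t, y) : ℝ × Euc n) (t, x t z) < ENNReal.ofReal (δ / 2) := by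
      rw [edist_lt_ofReal, Prod.dist_eq, dist_self]
      have hy2 : dist y (x t z) < δ / 2 := by rw [dist_eq_norm]; exact hyz_δ
      exact max_lt (by linarith) hy2
    have h3 : EMetric.infEdist ((t, y) : ℝ × Euc n) (caustic K₀ T d x)
        < ENNReal.ofReal (δ / 2) + ENNReal.ofReal (δ / 2) :=
      h1.trans_lt (ENNReal.add_lt_add hlt' h2)
    rw [← ENNReal.ofReal_add (by linarith) (by linarith)] at h3
    have hhalf : δ / 2 + δ / 2 = δ := by ring
    rw [hhalf] at h3
    exact absurd (hy.trans_lt h3) (lt_irrefl _)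
  obtain ⟨hcb, hinj, hopen, ⟨m, hm, hminv⟩, hball, hJ⟩ := hUIFT t ht z hz2 hnc
  have hyball : y ∈ ball (x t z) ρ := by
    rw [mem_ball, dist_eq_norm]; exact hyz_ρ
  obtain ⟨w, hw, hxw⟩ := hball hyball
  -- smoothness of x t
  have hxt : ContDiff ℝ (⊤ : ℕ∞) (fun ζ : Euc n => x t ζ) := by
    rw [← contDiffOn_univ]
    exact hx.comp ((contDiff_const.prodMk contDiff_id).contDiffOn)
      (fun ζ _ => ⟨ht, mem_univ ζ⟩)
  -- the inverse map has derivative of norm ≤ Rm1 on ball (x t z) ρ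
  have hkey : ∀ u ∈ ball (x t z) ρ, DifferentiableAt ℝ m u ∧ ‖fderiv ℝ m u‖ ≤ Rm1 := by
    intro u hu
    have huU : u ∈ x t '' ball z r := hball hu
    have hdm : DifferentiableAt ℝ m u :=
      (hm.contDiffAt (hopen.mem_nhds huU)).differentiableAt (by simp)
    refine ⟨hdm, ?_⟩
    obtain ⟨ζ, hζ, rfl⟩ := huU
    obtain ⟨Jinv, hJ1, hJ2, hJn⟩ := hJ ζ hζ
    have heq : (m ∘ x t) =ᶠ[𝓝 ζ] id := by
      filter_upwards [isOpen_ball.mem_nhds hζ] with v hv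
      exact hminv v hv
    have hdx : DifferentiableAt ℝ (x t) ζ := hxt.differentiable (by simp) ζ
    have e1 : fderiv ℝ (m ∘ x t) ζ = ContinuousLinearMap.id ℝ (Euc n) := by
      rw [heq.fderiv_eq, fderiv_id]
    rw [fderiv_comp ζ hdm hdx] at e1
    have e2 : fderiv ℝ m (x t ζ) = Jinv := by
      have h := congrArg (fun L : Euc n →L[ℝ] Euc n => L.comp Jinv) e1
      simpa [ContinuousLinearMap.comp_assoc, hJ1] using h
    rw [e2]; exact hJn
  have hmvt : ‖m y - m (x t z)‖ ≤ Rm1 * ‖y - x t z‖ :=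
    Convex.norm_image_sub_le_of_norm_fderiv_le
      (fun u hu => (hkey u hu).1) (fun u hu => (hkey u hu).2)
      (convex_ball _ _) (mem_ball_self hρ) hyball
  have hmz : m (x t z) = z := hminv z (mem_ball_self hr0)
  have hmy : m y = w := by rw [← hxw]; exact hminv w hw
  rw [hmy, hmz] at hmvt
  have hRm1' : Rm1 * ‖y - x t z‖ < r / 2 := by
    have := mul_lt_mul_of_pos_left hyz_r hRm1
    calc Rm1 * ‖y - x t z‖ < Rm1 * (r / (2 * Rm1)) := this
      _ = r / 2 := by field_simp
  have hwz : ‖w - z‖ < r / 2 := lt_of_le_of_lt hmvt hRm1'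
  -- w is a solution in K_{d/2}
  have hwmem : w ∈ {w ∈ fatten K₀ (d / 2) | y = x t w} := by
    refine ⟨?_, hxw.symm⟩
    have h1 : infDist w K₀ ≤ dist w z := infDist_le_dist_of_mem hz
    have h2 : dist w z < r := mem_ball.1 hw
    exact le_trans h1 (le_trans h2.le hr.2)
  have hsepw := hsep w hwmem
  rw [dist_comm, dist_eq_norm] at hsepw
  linarith

end
end

section
/- Let n ≥ 1, K₀ ⊂ ℝⁿ compact, T > 0, d > 0, η ∈ (0,∞], let g satisfy property (P7) with respect to Φ and x, and let α be any multi-index. Fix t ∈ [0,T], z₀ ∈ K_{d/2}, and suppose r, ρ, R₋₁ > 0 are such that x(t,·) restricted to B_r(z₀) is a diffeomorphism onto its open image containing B_ρ(y₀), where y₀ = x(t,z₀), and |J(t,z)⁻¹| ≤ R₋₁ for z ∈ B_r(z₀). Then there is a constant C, depending only on D₇, w₇, |α|, n, r, ρ and R₋₁, such that for all ε > 0: ε^{−(n+|α|)/2} | ∫_{B_{r/2}(z₀)} g(t,y₀,z,ε) (y₀ − x(t,z))^α e^{iΦ(t,y₀−x(t,z),z)/ε} ρ_η(y₀ − x(t,z))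 dz | ≤ C. -/
open MeasureTheory Metric Set
open scoped ENNReal Topology

noncomputable section

lemma pow_mul_exp_le_aux {k : ℕ} {b s ε : ℝ} (hb : 0 < b) (hs : 0 ≤ s) (hε : 0 < ε) :
    s ^ k * Real.exp (-(b * s ^ 2 / ε)) ≤
      max 1 ((k.factorial : ℝ) / b ^ k) * Real.sqrt ε ^ k := by
  have hsq : 0 < Real.sqrt ε := Real.sqrt_pos.2 hε
  rcases le_or_gt s (Real.sqrt ε) with h | h
  · calc s ^ k * Real.exp (-(b * s ^ 2 / ε)) ≤ s ^ k * 1 := by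
          apply mul_le_mul_of_nonneg_left _ (by positivity)
          exact Real.exp_le_one_iff.2 (by positivity |> neg_nonpos_of_nonneg)
      _ ≤ 1 * Real.sqrt ε ^ k := by
          rw [mul_one, one_mul]; exact pow_le_pow_left₀ hs h k
      _ ≤ _ := mul_le_mul_of_nonneg_right (le_max_left _ _) (by positivity)
  · have hs0 : 0 < s := lt_trans hsq h
    have hx : 0 < b * s ^ 2 / ε := by positivity
    have hexp : Real.exp (-(b * s ^ 2 / ε)) ≤ (k.factorial : ℝ) / (b * s ^ 2 / ε) ^ k := by
      rw [Real.exp_neg]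
      have h1 : (b * s ^ 2 / ε) ^ k / (k.factorial : ℝ) ≤ Real.exp (b * s ^ 2 / ε) :=
        Real.pow_div_factorial_le_exp _ hx.le k
      calc (Real.exp (b * s ^ 2 / ε))⁻¹ ≤ ((b * s ^ 2 / ε) ^ k / (k.factorial : ℝ))⁻¹ :=
            inv_anti₀ (by positivity) h1
        _ = (k.factorial : ℝ) / (b * s ^ 2 / ε) ^ k := by rw [inv_div]
    have hsk : Real.sqrt ε ^ k ≤ s ^ k := pow_le_pow_left₀ hsq.le h.le k
    have hε2 : Real.sqrt ε ^ 2 = ε := Real.sq_sqrt hε.le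
    calc s ^ k * Real.exp (-(b * s ^ 2 / ε))
        ≤ s ^ k * ((k.factorial : ℝ) / (b * s ^ 2 / ε) ^ k) :=
          mul_le_mul_of_nonneg_left hexp (by positivity)
      _ = (k.factorial : ℝ) / b ^ k * (ε ^ k / s ^ k) := by
          field_simp; ring_nf
          rw [mul_assoc (s ^ (k * 2) * b ^ k), ← mul_pow, mul_inv_cancel₀ hε.ne', one_pow, mul_one]
      _ ≤ (k.factorial : ℝ) / b ^ k * Real.sqrt ε ^ k := by
          apply mul_le_mul_of_nonneg_left _ (by positivity)
          rw [div_le_iff₀ (by positivity)]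
          calc ε ^ k = Real.sqrt ε ^ k * Real.sqrt ε ^ k := by
                rw [← pow_add, ← two_mul, pow_mul, hε2]
            _ ≤ Real.sqrt ε ^ k * s ^ k := mul_le_mul_of_nonneg_left hsk (by positivity)
      _ ≤ _ := mul_le_mul_of_nonneg_right (le_max_right _ _) (by positivity)

/-- The local integrals `I_{B_j}` satisfy `|I_B(t,z₀)| ≤ C` uniformly, under (P7)
and local invertibility of `x(t,·)` near `z₀`, with `C` depending only on
`D₇, w₇, |α|, n, r, ρ, R₋₁`. -/
theorem local_integral_uniform_bound {n : ℕ} (hn : 1 ≤ n)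
    (K₀ : Set (Euc n)) (hK₀ : IsCompact K₀)
    (T : ℝ) (hT : 0 < T) (d : ℝ) (hd : 0 < d)
    (η : ℝ≥0∞) (hη : 0 < η) (ρc : Euc n → ℝ) (hρc : IsCutoff η ρc)
    (x : ℝ → Euc n → Euc n) (Φ : ℝ → Euc n → Euc n → ℂ)
    (g : ℝ → Euc n → Euc n → ℝ → ℂ) (α : Fin n → ℕ)
    -- (P7)
    (hgbd : ∃ Cg : ℝ, ∀ t ∈ Icc 0 T, ∀ y : Euc n, ∀ z ∈ fatten K₀ d, ∀ ε > (0:ℝ),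
      ‖g t y z ε‖ ≤ Cg)
    (hgsupp : ∀ (t : ℝ) (y : Euc n) (ε : ℝ), ∀ z ∉ K₀, g t y z ε = 0)
    (D₇ w₇ : ℝ) (hD₇ : 0 < D₇) (hw₇ : 0 < w₇)
    (hP7 : ∀ t ∈ Icc 0 T, ∀ z ∈ fatten K₀ d, ∀ (y : Euc n), ∀ ε > (0:ℝ),
      ‖g t y z ε * Complex.exp (Complex.I * Φ t (y - x t z) z / (ε : ℂ)) *
          ((ρc (y - x t z) : ℝ) : ℂ)‖ ≤ D₇ * Real.exp (-w₇ * ‖y - x t z‖ ^ 2 / ε))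
    (r ρ Rm1 : ℝ) (hr : 0 < r) (hρ : 0 < ρ) (hRm1 : 0 < Rm1) :
    ∃ C : ℝ, ∀ t ∈ Icc 0 T, ∀ z₀ ∈ fatten K₀ (d / 2),
      Set.InjOn (x t) (ball z₀ r) →
      IsOpen (x t '' ball z₀ r) →
      (∃ m : Euc n → Euc n, ContDiffOn ℝ (⊤ : ℕ∞) m (x t '' ball z₀ r) ∧
        ∀ z ∈ ball z₀ r, m (x t z) = z) →
      ball (x t z₀) ρ ⊆ x t '' ball z₀ r →
      (∀ z ∈ ball z₀ r, ∃ Jinv : Euc n →L[ℝ] Euc n,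
        (fderiv ℝ (x t) z).comp Jinv = ContinuousLinearMap.id ℝ (Euc n) ∧
        Jinv.comp (fderiv ℝ (x t) z) = ContinuousLinearMap.id ℝ (Euc n) ∧
        ‖Jinv‖ ≤ Rm1) →
      ∀ ε > (0:ℝ),
        ε ^ (-((n : ℝ) + ∑ i, (α i : ℝ)) / 2) *
          ‖∫ z in ball z₀ (r / 2),
              g t (x t z₀) z ε *
              (∏ i, ((x t z₀ i - x t z i : ℝ) : ℂ) ^ α i) *
              Complex.exp (Complex.I * Φ t (x t z₀ - x t z) z / (ε : ℂ)) *
              ((ρc (x t z₀ - x t z) : ℝ) : ℂ)‖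
          ≤ C := by
  obtain ⟨_, _, _, _⟩ := hρc
  classical
  set k : ℕ := ∑ i, α i with hk
  set c : ℝ := min (2 * ρ / r) (1 / Rm1) with hc
  have hc0 : 0 < c := lt_min (by positivity) (by positivity)
  set b : ℝ := w₇ / 2 with hb
  have hb0 : 0 < b := by positivity
  set a : ℝ := b * c ^ 2 with ha
  have ha0 : 0 < a := by positivity
  set M : ℝ := max 1 ((k.factorial : ℝ) / b ^ k) with hM
  have hM0 : 0 < M := lt_of_lt_of_le one_pos (le_max_left _ _)
  refine ⟨D₇ * M * (Real.pi / a) ^ ((n : ℝ) / 2), ?_⟩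
  rintro t ht z₀ hz₀ hinj hopen ⟨m, hm, hmx⟩ hball hJ ε hε
  set y₀ := x t z₀ with hy₀
  -- the inverse map has derivative bounded by Rm1 on the ball `ball y₀ ρ`
  have hU : IsOpen (x t '' ball z₀ r) := hopen
  have hmd : DifferentiableOn ℝ m (x t '' ball z₀ r) := hm.differentiableOn (by simp)
  have hfd : ∀ w ∈ ball y₀ ρ, ‖fderivWithin ℝ m (ball y₀ ρ) w‖ ≤ Rm1 := by
    intro w hw
    obtain ⟨ζ, hζ, hζw⟩ := hball hw
    obtain ⟨Jinv, hJ1, hJ2, hJn⟩ := hJ ζ hζ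
    have hxdiff : DifferentiableAt ℝ (x t) ζ := by
      by_contra hnd
      have h0 : fderiv ℝ (x t) ζ = 0 := fderiv_zero_of_not_differentiableAt hnd
      have := congrArg (fun L : Euc n →L[ℝ] Euc n => L (EuclideanSpace.single ⟨0, hn⟩ 1)) hJ1
      simp [h0] at this
      have h1 : ‖(EuclideanSpace.single (⟨0, hn⟩ : Fin n) (1:ℝ))‖ = 1 := by
        simp [EuclideanSpace.norm_single]
      rw [← this] at h1
      simp at h1
    have hwU : w ∈ x t '' ball z₀ r := hball hw
    have hmdiff : DifferentiableAt ℝ m w :=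
      (hmd w hwU).differentiableAt (hU.mem_nhds hwU)
    have heq : m ∘ x t =ᶠ[nhds ζ] id := by
      filter_upwards [isOpen_ball.mem_nhds hζ] with z hz
      exact hmx z hz
    have hcomp : (fderiv ℝ m w).comp (fderiv ℝ (x t) ζ) = ContinuousLinearMap.id ℝ (Euc n) := by
      have h1 : fderiv ℝ (m ∘ x t) ζ = (fderiv ℝ m w).comp (fderiv ℝ (x t) ζ) := by
        rw [← hζw] at hmdiff ⊢
        exact fderiv_comp ζ hmdiff hxdiff
      rw [← h1, heq.fderiv_eq, fderiv_id]
    have hfm : fderiv ℝ m w = Jinv := by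
      calc fderiv ℝ m w
          = (fderiv ℝ m w).comp ((fderiv ℝ (x t) ζ).comp Jinv) := by
            rw [hJ1, ContinuousLinearMap.comp_id]
        _ = ((fderiv ℝ m w).comp (fderiv ℝ (x t) ζ)).comp Jinv := by
            rw [ContinuousLinearMap.comp_assoc]
        _ = Jinv := by rw [hcomp, ContinuousLinearMap.id_comp]
    rw [fderivWithin_of_isOpen isOpen_ball hw, hfm]
    exact hJn
  -- key geometric inequality
  have key : ∀ z ∈ ball z₀ (r / 2), c * ‖z - z₀‖ ≤ ‖y₀ - x t z‖ := by
    intro z hz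
    have hzr : z ∈ ball z₀ r := ball_subset_ball (by linarith) hz
    have hzn : ‖z - z₀‖ < r / 2 := by
      rw [← dist_eq_norm]; exact mem_ball.1 hz
    rcases le_or_gt ρ ‖y₀ - x t z‖ with h | h
    · have h1 : c ≤ 2 * ρ / r := min_le_left _ _
      have h2 : c * ‖z - z₀‖ ≤ (2 * ρ / r) * (r / 2) := by
        apply mul_le_mul h1 hzn.le (norm_nonneg _) (by positivity)
      have h3 : (2 * ρ / r) * (r / 2) = ρ := by field_simp
      linarith
    · have hxz : x t z ∈ ball y₀ ρ := by
        rw [mem_ball, dist_eq_norm, ← norm_neg]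
        simpa [neg_sub] using h
      have hy₀b : y₀ ∈ ball y₀ ρ := mem_ball_self hρ
      have hlip := (convex_ball y₀ ρ).norm_image_sub_le_of_norm_fderivWithin_le
        (hmd.mono hball) hfd hy₀b hxz
      rw [hmx z hzr, hmx z₀ (mem_ball_self hr)] at hlip
      have h2 : ‖x t z - y₀‖ = ‖y₀ - x t z‖ := norm_sub_rev _ _
      have h3 : c ≤ 1 / Rm1 := min_le_right _ _
      have h4 : c * ‖z - z₀‖ ≤ (1 / Rm1) * (Rm1 * ‖y₀ - x t z‖) := by
        apply mul_le_mul h3 _ (norm_nonneg _) (by positivity)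
        rw [← h2]; exact hlip
      have h5 : (1 / Rm1) * (Rm1 * ‖y₀ - x t z‖) = ‖y₀ - x t z‖ := by
        field_simp
      linarith
  -- pointwise bound on the integrand
  have hpt : ∀ z ∈ ball z₀ (r / 2),
      ‖g t y₀ z ε * (∏ i, ((y₀ i - x t z i : ℝ) : ℂ) ^ α i) *
          Complex.exp (Complex.I * Φ t (y₀ - x t z) z / (ε : ℂ)) *
          ((ρc (y₀ - x t z) : ℝ) : ℂ)‖
        ≤ D₇ * M * Real.sqrt ε ^ k * Real.exp (-(a * ‖z - z₀‖ ^ 2 / ε)) := by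
    intro z hz
    by_cases hzK : z ∈ K₀
    · have hzd : z ∈ fatten K₀ d := by
        simp only [fatten, mem_setOf_eq]
        rw [Metric.infDist_zero_of_mem hzK]
        exact hd.le
      have h7 := hP7 t ht z hzd y₀ ε hε
      set s := ‖y₀ - x t z‖ with hsdef
      have hs0 : 0 ≤ s := norm_nonneg _
      have hre : g t y₀ z ε * (∏ i, ((y₀ i - x t z i : ℝ) : ℂ) ^ α i) *
          Complex.exp (Complex.I * Φ t (y₀ - x t z) z / (ε : ℂ)) *
          ((ρc (y₀ - x t z) : ℝ) : ℂ)
          = (∏ i, ((y₀ i - x t z i : ℝ) : ℂ) ^ α i) *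
            (g t y₀ z ε * Complex.exp (Complex.I * Φ t (y₀ - x t z) z / (ε : ℂ)) *
              ((ρc (y₀ - x t z) : ℝ) : ℂ)) := by ring
      rw [hre, norm_mul]
      have hP : ‖∏ i, ((y₀ i - x t z i : ℝ) : ℂ) ^ α i‖ ≤ s ^ k := by
        rw [norm_prod]
        have h1 : ∀ i ∈ Finset.univ, ‖((y₀ i - x t z i : ℝ) : ℂ) ^ α i‖ ≤ s ^ α i := by
          intro i _
          rw [norm_pow, Complex.norm_real, Real.norm_eq_abs]
          apply pow_le_pow_left₀ (abs_nonneg _)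
          have := coord_abs_le_norm (y₀ - x t z) i
          simpa using this
        calc ∏ i, ‖((y₀ i - x t z i : ℝ) : ℂ) ^ α i‖ ≤ ∏ i, s ^ α i :=
              Finset.prod_le_prod (fun i _ => norm_nonneg _) h1
          _ = s ^ k := Finset.prod_pow_eq_pow_sum _ _ _
      have hexpsplit : Real.exp (-w₇ * s ^ 2 / ε)
          = Real.exp (-(b * s ^ 2 / ε)) * Real.exp (-(b * s ^ 2 / ε)) := by
        rw [← Real.exp_add]
        congr 1
        rw [hb]
        ring
      have hab : a * ‖z - z₀‖ ^ 2 ≤ b * s ^ 2 := by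
        have hkey := key z hz
        have h1 : (c * ‖z - z₀‖) ^ 2 ≤ s ^ 2 :=
          pow_le_pow_left₀ (by positivity) hkey 2
        rw [ha]
        nlinarith [hb0]
      have hexp2 : Real.exp (-(b * s ^ 2 / ε)) ≤ Real.exp (-(a * ‖z - z₀‖ ^ 2 / ε)) := by
        apply Real.exp_le_exp.2
        rw [neg_le_neg_iff]
        exact div_le_div_of_nonneg_right hab hε.le
      calc ‖∏ i, ((y₀ i - x t z i : ℝ) : ℂ) ^ α i‖ *
            ‖g t y₀ z ε * Complex.exp (Complex.I * Φ t (y₀ - x t z) z / (ε : ℂ)) *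
              ((ρc (y₀ - x t z) : ℝ) : ℂ)‖
          ≤ s ^ k * (D₇ * Real.exp (-w₇ * s ^ 2 / ε)) :=
            mul_le_mul hP h7 (norm_nonneg _) (by positivity)
        _ = D₇ * ((s ^ k * Real.exp (-(b * s ^ 2 / ε))) * Real.exp (-(b * s ^ 2 / ε))) := by
            rw [hexpsplit]; ring
        _ ≤ D₇ * ((M * Real.sqrt ε ^ k) * Real.exp (-(a * ‖z - z₀‖ ^ 2 / ε))) := by
            apply mul_le_mul_of_nonneg_left _ hD₇.le
            exact mul_le_mul (pow_mul_exp_le_aux hb0 hs0 hε) hexp2 (Real.exp_pos _).le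
              (by positivity)
        _ = D₇ * M * Real.sqrt ε ^ k * Real.exp (-(a * ‖z - z₀‖ ^ 2 / ε)) := by ring
    · rw [hgsupp t y₀ ε z hzK]
      simp only [zero_mul, norm_zero]
      positivity
  -- bound the integral of the Gaussian majorant
  have hIG : Integrable (fun z : Euc n => Real.exp (-(a / ε) * ‖z - z₀‖ ^ 2)) volume := by
    have hc' : (0:ℝ) < a / ε := by positivity
    have h0 : Integrable (fun v : Euc n => Real.exp (-(a / ε) * ‖v‖ ^ 2)) volume := by
      have h1 := (GaussianFourier.integrable_cexp_neg_mul_sq_norm_add (V := Euc n)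
        (b := ((a / ε : ℝ) : ℂ)) (by simpa using hc') 0 0).norm
      have h2 : (fun v : Euc n => ‖Complex.exp (-((a / ε : ℝ) : ℂ) * (‖v‖ : ℂ) ^ 2 +
          0 * (inner ℝ (0 : Euc n) v : ℝ))‖)
          = fun v : Euc n => Real.exp (-(a / ε) * ‖v‖ ^ 2) := by
        funext v
        have hv : (-((a / ε : ℝ) : ℂ) * (‖v‖ : ℂ) ^ 2 +
            0 * ((inner ℝ (0 : Euc n) v : ℝ) : ℂ)) = ((-(a / ε) * ‖v‖ ^ 2 : ℝ) : ℂ) := by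
          push_cast; ring
        rw [hv, Complex.norm_exp, Complex.ofReal_re]
      rwa [h2] at h1
    exact h0.comp_sub_right z₀
  have hIG' : Integrable (fun z : Euc n =>
      D₇ * M * Real.sqrt ε ^ k * Real.exp (-(a * ‖z - z₀‖ ^ 2 / ε))) volume := by
    have heq : (fun z : Euc n => D₇ * M * Real.sqrt ε ^ k * Real.exp (-(a * ‖z - z₀‖ ^ 2 / ε)))
        = fun z : Euc n => D₇ * M * Real.sqrt ε ^ k * Real.exp (-(a / ε) * ‖z - z₀‖ ^ 2) := by
      funext z; congr 2; ring
    rw [heq]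
    exact hIG.const_mul _
  have hInt : ∫ z in ball z₀ (r / 2),
        D₇ * M * Real.sqrt ε ^ k * Real.exp (-(a * ‖z - z₀‖ ^ 2 / ε))
      ≤ D₇ * M * Real.sqrt ε ^ k * (Real.pi / (a / ε)) ^ ((n : ℝ) / 2) := by
    have h1 : ∫ z in ball z₀ (r / 2),
          D₇ * M * Real.sqrt ε ^ k * Real.exp (-(a * ‖z - z₀‖ ^ 2 / ε))
        ≤ ∫ z : Euc n, D₇ * M * Real.sqrt ε ^ k * Real.exp (-(a * ‖z - z₀‖ ^ 2 / ε)) := by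
      apply setIntegral_le_integral hIG'
      filter_upwards with z
      positivity
    refine h1.trans (le_of_eq ?_)
    have heq : (fun z : Euc n => D₇ * M * Real.sqrt ε ^ k * Real.exp (-(a * ‖z - z₀‖ ^ 2 / ε)))
        = fun z : Euc n => D₇ * M * Real.sqrt ε ^ k * Real.exp (-(a / ε) * ‖z - z₀‖ ^ 2) := by
      funext z; congr 2; ring
    rw [heq, integral_const_mul]
    congr 1
    have h2 : ∫ z : Euc n, Real.exp (-(a / ε) * ‖z - z₀‖ ^ 2)
        = ∫ v : Euc n, Real.exp (-(a / ε) * ‖v‖ ^ 2) :=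
      integral_sub_right_eq_self (fun v : Euc n => Real.exp (-(a / ε) * ‖v‖ ^ 2)) z₀
    rw [h2, GaussianFourier.integral_rexp_neg_mul_sq_norm (by positivity)]
    norm_num [finrank_euclideanSpace_fin]
  have hnorm : ‖∫ z in ball z₀ (r / 2),
        g t y₀ z ε * (∏ i, ((y₀ i - x t z i : ℝ) : ℂ) ^ α i) *
          Complex.exp (Complex.I * Φ t (y₀ - x t z) z / (ε : ℂ)) *
          ((ρc (y₀ - x t z) : ℝ) : ℂ)‖
      ≤ D₇ * M * Real.sqrt ε ^ k * (Real.pi / (a / ε)) ^ ((n : ℝ) / 2) := by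
    refine le_trans (norm_integral_le_of_norm_le ?_ ?_) hInt
    · exact hIG'.restrict
    · exact (ae_restrict_iff' measurableSet_ball).2 (Filter.Eventually.of_forall hpt)
  -- final arithmetic
  have hsum : (∑ i, (α i : ℝ)) = (k : ℝ) := by rw [hk]; push_cast; rfl
  rw [hsum]
  have hpre : (0:ℝ) ≤ ε ^ (-((n : ℝ) + (k : ℝ)) / 2) := Real.rpow_nonneg hε.le _
  have h1 : Real.sqrt ε ^ k = ε ^ ((k : ℝ) / 2) := by
    rw [Real.sqrt_eq_rpow, ← Real.rpow_natCast (ε ^ ((1:ℝ)/2)) k, ← Real.rpow_mul hε.le]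
    norm_num
    ring_nf
  have h2 : Real.pi / (a / ε) = (Real.pi / a) * ε := by field_simp
  have h3 : ((Real.pi / a) * ε) ^ ((n : ℝ) / 2)
      = (Real.pi / a) ^ ((n : ℝ) / 2) * ε ^ ((n : ℝ) / 2) :=
    Real.mul_rpow (by positivity) hε.le
  have h4 : ε ^ (-((n : ℝ) + (k : ℝ)) / 2) * ε ^ ((k : ℝ) / 2) * ε ^ ((n : ℝ) / 2) = 1 := by
    rw [← Real.rpow_add hε, ← Real.rpow_add hε,
      show -((n : ℝ) + (k : ℝ)) / 2 + (k : ℝ) / 2 + (n : ℝ) / 2 = 0 by ring, Real.rpow_zero]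
  calc ε ^ (-((n : ℝ) + (k : ℝ)) / 2) * ‖∫ z in ball z₀ (r / 2),
          g t y₀ z ε * (∏ i, ((y₀ i - x t z i : ℝ) : ℂ) ^ α i) *
            Complex.exp (Complex.I * Φ t (y₀ - x t z) z / (ε : ℂ)) *
            ((ρc (y₀ - x t z) : ℝ) : ℂ)‖
      ≤ ε ^ (-((n : ℝ) + (k : ℝ)) / 2) *
          (D₇ * M * Real.sqrt ε ^ k * (Real.pi / (a / ε)) ^ ((n : ℝ) / 2)) :=
        mul_le_mul_of_nonneg_left hnorm hpre
    _ = D₇ * M * (Real.pi / a) ^ ((n : ℝ) / 2) *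
          (ε ^ (-((n : ℝ) + (k : ℝ)) / 2) * ε ^ ((k : ℝ) / 2) * ε ^ ((n : ℝ) / 2)) := by
        rw [h1, h2, h3]; ring
    _ = D₇ * M * (Real.pi / a) ^ ((n : ℝ) / 2) := by rw [h4, mul_one]


end
end
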